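/- arXiv:2409.17748 — 7 statements merged into one kernel-verified Lean document; each statement's English description precedes it below -/
import Mathlib

section
/- For every meager set F ⊆ ℤ^ω and every perfect tree T ⊆ ℤ^{<ω} there exists a perfect tree T' ⊆ T such that for every n ≥ 1 the n-fold sum F + [T'] + [T'] + ⋯ + [T'] is meager; moreover, if T is uniformly perfect then T' can be chosen uniformly perfect. -/
open Pointwise Filter

/-- The length-`n` initial segment of `x : ℕ → ℤ`, as a finite sequence. -/
def res (x : ℕ → ℤ) (n : ℕ) : List ℤ := List.ofFn (fun i : Fin n => x (i : ℕ))

/-- A tree on `ℤ`: a set of finite integer sequences closed under initial segments. -/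
def IsTree (T : Set (List ℤ)) : Prop := ∀ σ ∈ T, ∀ τ, τ <+: σ → τ ∈ T

/-- The set of infinite branches of a tree. -/
def branches (T : Set (List ℤ)) : Set (ℕ → ℤ) := {x | ∀ n, res x n ∈ T}

/-- `σ` is a splitting node of `T` (at least two immediate successors). -/
def Splits (T : Set (List ℤ)) (σ : List ℤ) : Prop :=
  ∃ i j : ℤ, i ≠ j ∧ σ ++ [i] ∈ T ∧ σ ++ [j] ∈ T

/-- `σ` is an ω-splitting node of `T` (infinitely many immediate successors). -/
def OmegaSplits (T : Set (List ℤ)) (σ : List ℤ) : Prop :=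
  {i : ℤ | σ ++ [i] ∈ T}.Infinite

/-- Perfect tree: a nonempty tree in which every node has a splitting extension. -/
def IsPerfect (T : Set (List ℤ)) : Prop :=
  IsTree T ∧ T.Nonempty ∧ ∀ σ ∈ T, ∃ τ ∈ T, σ <+: τ ∧ Splits T τ

/-- Uniformly perfect tree: perfect, and on every level either all nodes split
or none do. -/
def IsUniformlyPerfect (T : Set (List ℤ)) : Prop :=
  IsPerfect T ∧ ∀ n : ℕ,
    (∀ σ ∈ T, σ.length = n → Splits T σ) ∨ (∀ σ ∈ T, σ.length = n → ¬ Splits T σ)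

/-- Miller tree: a nonempty tree in which every node has an ω-splitting extension. -/
def IsMiller (T : Set (List ℤ)) : Prop :=
  IsTree T ∧ T.Nonempty ∧ ∀ σ ∈ T, ∃ τ ∈ T, σ <+: τ ∧ OmegaSplits T τ

/-- Laver tree: a tree with a stem `σ` such that every node is an initial
segment of the stem, or extends it and is ω-splitting. -/
def IsLaver (T : Set (List ℤ)) : Prop :=
  IsTree T ∧ ∃ σ ∈ T, ∀ τ ∈ T, τ <+: σ ∨ (σ <+: τ ∧ OmegaSplits T τ)

/-- The ω-Silver tree with parameters `A` (set of free coordinates) and `xT`. -/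
def silverTree (A : Set ℕ) (xT : ℕ → ℤ) : Set (List ℤ) :=
  {σ : List ℤ | ∀ n (h : n < σ.length), n ∉ A → σ.get ⟨n, h⟩ = xT n}

/-- ω-Silver tree: `σ ∈ T` iff `σ` agrees with `xT` outside an infinite set `A`. -/
def IsOmegaSilver (T : Set (List ℤ)) : Prop :=
  ∃ A : Set ℕ, A.Infinite ∧ ∃ xT : ℕ → ℤ, T = silverTree A xT

/-- Membership in the σ-ideal `M₋`: `F` is covered by a set of the form
`{x : ∀∞ n, x↾Iₙ ≠ x_A↾Iₙ}` where the consecutive intervals `Iₙ = [a n, a (n+1))`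
(`a` strictly monotone, `a 0 = 0`) partition `ω`. -/
def MemMminus (F : Set (ℕ → ℤ)) : Prop :=
  ∃ xA : ℕ → ℤ, ∃ a : ℕ → ℕ, a 0 = 0 ∧ StrictMono a ∧
    F ⊆ {x | ∀ᶠ n in Filter.atTop, ∃ k, a n ≤ k ∧ k < a (n + 1) ∧ x k ≠ xA k}

/-- Membership in the ideal `nwd₋` generated by the sets
`{x : ∀ n, x↾Iₙ ≠ x_A↾Iₙ}`: `F` is covered by finitely many generators. -/
def MemNwdMinus (F : Set (ℕ → ℤ)) : Prop :=
  ∃ (m : ℕ) (xA : Fin m → ℕ → ℤ) (a : Fin m → ℕ → ℕ),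
    (∀ i, a i 0 = 0 ∧ StrictMono (a i)) ∧
    F ⊆ ⋃ i, {x | ∀ n, ∃ k, a i n ≤ k ∧ k < a i (n + 1) ∧ x k ≠ xA i k}

/-- The basic clopen set `[σ]` of all extensions of `σ`. -/
def cyl (σ : List ℤ) : Set (ℕ → ℤ) := {x | res x σ.length = σ}

/-- Fake null set: for every `ε > 0` it is covered by countably many cylinders
`[σₙ]` with `Σₙ 2^{-|σₙ|} < ε`. -/
def IsFakeNull (F : Set (ℕ → ℤ)) : Prop :=
  ∀ ε : ℝ, 0 < ε → ∃ σ : ℕ → List ℤ,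
    Summable (fun n => (1 : ℝ) / 2 ^ (σ n).length) ∧
    (∑' n, (1 : ℝ) / 2 ^ (σ n).length) < ε ∧
    F ⊆ ⋃ n, cyl (σ n)

/-- `iterSum F B n` is the algebraic sum `F + B + B + ⋯ + B` (`n` copies of `B`). -/
def iterSum (F B : Set (ℕ → ℤ)) : ℕ → Set (ℕ → ℤ)
  | 0 => F
  | n + 1 => iterSum F B n + B

namespace Stmt6

@[simp] lemma length_res (x : ℕ → ℤ) (n : ℕ) : (res x n).length = n := by simp [res]

lemma getElem_res (x : ℕ → ℤ) {n i : ℕ} (h : i < (res x n).length) : (res x n)[i] = x i := by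
  simp [res]

lemma prefix_of_getElem {u v : List ℤ} (hl : u.length ≤ v.length)
    (h : ∀ i (hi : i < u.length), u[i] = v[i]'(lt_of_lt_of_le hi hl)) : u <+: v := by
  rw [List.prefix_iff_eq_take]
  apply List.ext_getElem (by simp [Nat.min_eq_left hl])
  intro i h1 h2
  simp only [List.getElem_take]
  exact h i h1

lemma res_prefix (x : ℕ → ℤ) {m n : ℕ} (h : m ≤ n) : res x m <+: res x n := by
  apply prefix_of_getElem (by simpa using h)
  intro i hi
  simp [getElem_res]

lemma mem_cyl {x : ℕ → ℤ} {σ : List ℤ} :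
    x ∈ cyl σ ↔ ∀ i (hi : i < σ.length), x i = σ[i] := by
  constructor
  · intro hx i hi
    have h2 : i < (res x σ.length).length := by simpa using hi
    rw [← getElem_res (x := x) h2]
    exact List.getElem_of_eq hx h2
  · intro h
    apply List.ext_getElem (by simp)
    intro i h1 h2
    simp [getElem_res, h i h2]

lemma mem_cyl_res (x : ℕ → ℤ) (n : ℕ) : x ∈ cyl (res x n) := by
  rw [mem_cyl]; intro i hi; simp [getElem_res]

lemma cyl_anti {σ τ : List ℤ} (h : σ <+: τ) : cyl τ ⊆ cyl σ := by
  intro x hx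
  rw [mem_cyl] at hx ⊢
  intro i hi
  rw [hx i (lt_of_lt_of_le hi h.length_le), h.getElem hi]

lemma res_eq_iff {x : ℕ → ℤ} {σ : List ℤ} {n : ℕ} (hn : n = σ.length) :
    res x n = σ ↔ x ∈ cyl σ := by subst hn; exact Iff.rfl

lemma cyl_nonempty (σ : List ℤ) : (cyl σ).Nonempty := by
  refine ⟨fun i => σ.getD i 0, ?_⟩
  rw [mem_cyl]; intro i hi; simp [List.getD_eq_getElem, hi]

lemma isOpen_cyl (σ : List ℤ) : IsOpen (cyl σ) := by
  have : cyl σ = ⋂ (i : Fin σ.length), (fun x : ℕ → ℤ => x (i : ℕ)) ⁻¹' {σ.get i} := by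
    ext x
    simp only [Set.mem_iInter, Set.mem_preimage, Set.mem_singleton_iff, mem_cyl]
    exact ⟨fun h i => h i i.2, fun h i hi => h ⟨i, hi⟩⟩
  rw [this]
  exact isOpen_iInter_of_finite fun i => (isOpen_discrete _).preimage (continuous_apply _)

lemma exists_cyl_subset {U : Set (ℕ → ℤ)} (hU : IsOpen U) {x : ℕ → ℤ} (hx : x ∈ U) :
    ∃ m, cyl (res x m) ⊆ U := by
  obtain ⟨I, u, hu, hsub⟩ := isOpen_pi_iff.1 hU x hx
  refine ⟨(I.sup id) + 1, fun y hy => hsub ?_⟩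
  intro a ha
  have h1 : a < I.sup id + 1 := Nat.lt_succ_of_le (Finset.le_sup (f := id) ha)
  have := (mem_cyl.1 hy) a (by simpa using h1)
  rw [getElem_res] at this
  rw [this]
  exact (hu a ha).2




/-- pointwise operations on lists -/
def ladd (u v : List ℤ) : List ℤ := List.zipWith (· + ·) u v
def lsub (u v : List ℤ) : List ℤ := List.zipWith (· - ·) u v

@[simp] lemma length_ladd (u v : List ℤ) : (ladd u v).length = min u.length v.length := by
  simp [ladd]
@[simp] lemma length_lsub (u v : List ℤ) : (lsub u v).length = min u.length v.length := by
  simp [lsub]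
lemma getElem_ladd (u v : List ℤ) {i} (h : i < (ladd u v).length) :
    (ladd u v)[i] = u[i]'(by simp at h; omega) + v[i]'(by simp at h; omega) := by
  simp [ladd]
lemma getElem_lsub (u v : List ℤ) {i} (h : i < (lsub u v).length) :
    (lsub u v)[i] = u[i]'(by simp at h; omega) - v[i]'(by simp at h; omega) := by
  simp [lsub]

lemma ladd_lsub_cancel {u v : List ℤ} (h : u.length = v.length) : ladd (lsub u v) v = u := by
  apply List.ext_getElem (by simp; omega)
  intro i h1 h2
  rw [getElem_ladd _ _ h1, getElem_lsub _ _ (by simp at h1 ⊢; omega)]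
  ring

lemma lsub_ladd_cancel {u v : List ℤ} (h : u.length = v.length) : lsub (ladd u v) v = u := by
  apply List.ext_getElem (by simp; omega)
  intro i h1 h2
  rw [getElem_lsub _ _ h1, getElem_ladd _ _ (by simp at h1 ⊢; omega)]
  ring

lemma prefix_zipWith (f : ℤ → ℤ → ℤ) {u v u' v' : List ℤ} (hu : u <+: u') (hv : v <+: v') :
    List.zipWith f u v <+: List.zipWith f u' v' := by
  have h1 := hu.length_le; have h2 := hv.length_le
  apply prefix_of_getElem (by simp; omega)
  intro i hi
  simp only [List.getElem_zipWith]
  simp only [List.length_zipWith] at hi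
  rw [hu.getElem (by omega), hv.getElem (by omega)]

lemma prefix_ladd {u v u' v' : List ℤ} (hu : u <+: u') (hv : v <+: v') :
    ladd u v <+: ladd u' v' := prefix_zipWith _ hu hv
lemma prefix_lsub {u v u' v' : List ℤ} (hu : u <+: u') (hv : v <+: v') :
    lsub u v <+: lsub u' v' := prefix_zipWith _ hu hv

/-- pointwise sum of a list of lists, ambient length d -/
def vsum (d : ℕ) (l : List (List ℤ)) : List ℤ := l.foldr ladd (List.replicate d 0)

@[simp] lemma vsum_nil (d : ℕ) : vsum d [] = List.replicate d 0 := rfl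
@[simp] lemma vsum_cons (d : ℕ) (a : List ℤ) (l : List (List ℤ)) :
    vsum d (a :: l) = ladd a (vsum d l) := rfl

lemma length_vsum {d : ℕ} {l : List (List ℤ)} (h : ∀ u ∈ l, u.length = d) :
    (vsum d l).length = d := by
  induction l with
  | nil => simp
  | cons a l ih =>
    simp only [vsum_cons, length_ladd, ih (fun u hu => h u (List.mem_cons_of_mem _ hu)),
      h a (List.mem_cons_self), min_self]

lemma prefix_vsum {d d' : ℕ} {l l' : List (List ℤ)} (hd : d ≤ d')
    (hl : List.Forall₂ (· <+: ·) l l') : vsum d l <+: vsum d' l' := by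
  induction hl with
  | nil =>
    simp only [vsum_nil]
    exact prefix_of_getElem (by simpa using hd) (by intro i hi; simp at hi ⊢)
  | cons h _ ih => exact prefix_ladd h ih

/-- all length-n tuples (as lists) with entries from l -/
def tuples : ℕ → List (List ℤ) → List (List (List ℤ))
  | 0, _ => [[]]
  | n + 1, l => l.flatMap (fun a => (tuples n l).map (a :: ·))

lemma mem_tuples {n : ℕ} {l : List (List ℤ)} {t : List (List ℤ)} :
    t ∈ tuples n l ↔ t.length = n ∧ ∀ x ∈ t, x ∈ l := by
  induction n generalizing t with
  | zero =>
    simp only [tuples, List.mem_singleton]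
    constructor
    · rintro rfl; simp
    · rintro ⟨h, -⟩; exact List.eq_nil_of_length_eq_zero h
  | succ n ih =>
    simp only [tuples, List.mem_flatMap, List.mem_map]
    constructor
    · rintro ⟨a, ha, t', ht', rfl⟩
      obtain ⟨hlen, hmem⟩ := ih.1 ht'
      refine ⟨by simp [hlen], ?_⟩
      intro x hx
      rcases List.mem_cons.1 hx with rfl | hx
      · exact ha
      · exact hmem x hx
    · rintro ⟨hlen, hmem⟩
      match t, hlen with
      | a :: t', hlen =>
        exact ⟨a, hmem a (List.mem_cons_self), t',
          ih.2 ⟨by simpa using hlen, fun x hx => hmem x (List.mem_cons_of_mem _ hx)⟩, rfl⟩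



lemma res_add (x y : ℕ → ℤ) (d : ℕ) : res (x + y) d = ladd (res x d) (res y d) := by
  apply List.ext_getElem (by simp)
  intro i h1 h2
  rw [getElem_res, getElem_ladd _ _ h2, getElem_res, getElem_res]
  rfl

lemma res_zero (d : ℕ) : res (0 : ℕ → ℤ) d = List.replicate d 0 := by
  apply List.ext_getElem (by simp)
  intro i h1 h2
  rw [getElem_res]
  simp

lemma res_listSum (xs : List (ℕ → ℤ)) (d : ℕ) :
    res xs.sum d = vsum d (xs.map (fun x => res x d)) := by
  induction xs with
  | nil => simpa using res_zero d
  | cons a l ih => rw [List.sum_cons, List.map_cons, vsum_cons, ← ih, res_add]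

lemma res_sub_of_add {z f y : ℕ → ℤ} (h : z = f + y) (d : ℕ) :
    res f d = lsub (res z d) (res y d) := by
  subst h
  rw [res_add, lsub_ladd_cancel (by simp)]

/-- extension avoiding a closed nowhere dense set -/
lemma exists_avoid {F : Set (ℕ → ℤ)} (hcl : IsClosed F) (hnd : IsNowhereDense F)
    (φ : List ℤ) : ∃ ξ, φ <+: ξ ∧ cyl ξ ∩ F = ∅ := by
  have hne : ¬ (cyl φ ⊆ F) := by
    intro hsub
    have : cyl φ ⊆ interior F := by
      rw [← (isOpen_cyl φ).interior_eq]
      exact interior_mono hsub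
    rw [hcl.isNowhereDense_iff.1 hnd] at this
    exact (cyl_nonempty φ).not_subset_empty this
  obtain ⟨x, hxcyl, hxF⟩ := Set.not_subset.1 hne
  obtain ⟨m, hm⟩ := exists_cyl_subset hcl.isOpen_compl hxF
  refine ⟨res x (max m φ.length), ?_, ?_⟩
  · have h' : res x φ.length = φ := hxcyl
    conv_lhs => rw [← h']
    exact res_prefix x (le_max_right _ _)
  · rw [Set.eq_empty_iff_forall_notMem]
    intro y ⟨hy1, hy2⟩
    exact hm (cyl_anti (res_prefix x (le_max_left _ _)) hy1) hy2

open Classical in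
noncomputable def avoid (F : Set (ℕ → ℤ)) (φ : List ℤ) : List ℤ :=
  if h : ∃ ξ, φ <+: ξ ∧ cyl ξ ∩ F = ∅ then h.choose else φ

lemma avoid_prefix (F : Set (ℕ → ℤ)) (φ : List ℤ) : φ <+: avoid F φ := by
  rw [avoid]
  split
  next h => exact h.choose_spec.1
  next => exact List.prefix_refl φ

lemma avoid_spec {F : Set (ℕ → ℤ)} (hcl : IsClosed F) (hnd : IsNowhereDense F)
    (φ : List ℤ) : cyl (avoid F φ) ∩ F = ∅ := by
  have h := exists_avoid hcl hnd φ
  rw [avoid, dif_pos h]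
  exact h.choose_spec.2

/-- meager decomposition into countably many closed nwd sets -/
lemma meager_decomp {F : Set (ℕ → ℤ)} (hF : IsMeagre F) :
    ∃ C : ℕ → Set (ℕ → ℤ), (∀ k, IsClosed (C k) ∧ IsNowhereDense (C k)) ∧ F ⊆ ⋃ k, C k := by
  obtain ⟨S, hnd, hcnt, hsub⟩ := isMeagre_iff_countable_union_isNowhereDense.1 hF
  rcases S.eq_empty_or_nonempty with rfl | hne
  · exact ⟨fun _ => ∅, fun k => ⟨isClosed_empty, isNowhereDense_empty⟩, by simpa using hsub⟩
  · obtain ⟨f, rfl⟩ := hcnt.exists_eq_range hne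
    refine ⟨fun k => closure (f k), fun k => ⟨isClosed_closure, ?_⟩, ?_⟩
    · exact (hnd _ ⟨k, rfl⟩).closure
    · refine hsub.trans ?_
      rw [Set.sUnion_range]
      exact Set.iUnion_mono fun k => subset_closure

/-- representation of iterSum elements -/
lemma iterSum_rep {F B : Set (ℕ → ℤ)} {n : ℕ} {z : ℕ → ℤ} (hz : z ∈ iterSum F B n) :
    ∃ f ∈ F, ∃ xs : List (ℕ → ℤ), xs.length = n ∧ (∀ x ∈ xs, x ∈ B) ∧ z = f + xs.sum := by
  induction n generalizing z with
  | zero => exact ⟨z, hz, [], rfl, by simp, by simp⟩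
  | succ n ih =>
    obtain ⟨w, hw, y, hy, rfl⟩ := Set.mem_add.1 hz
    obtain ⟨f, hf, xs, hlen, hmem, rfl⟩ := ih hw
    refine ⟨f, hf, y :: xs, by simp [hlen], ?_, ?_⟩
    · intro x hx
      rcases List.mem_cons.1 hx with rfl | hx
      · exact hy
      · exact hmem x hx
    · rw [List.sum_cons]; abel



/-! ### canonical extensions in a perfect tree -/

section Ext
variable (T : Set (List ℤ))

lemma exists_succ (hT : IsPerfect T) {σ : List ℤ} (hσ : σ ∈ T) : ∃ i, σ ++ [i] ∈ T := by
  obtain ⟨τ, hτT, hpre, i, j, hij, hi, hj⟩ := hT.2.2 σ hσ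
  obtain ⟨r, rfl⟩ := hpre
  cases r with
  | nil => exact ⟨i, by simpa using hi⟩
  | cons a r' =>
    refine ⟨a, hT.1 _ hi _ ?_⟩
    refine List.IsPrefix.trans ⟨r', by simp⟩ (List.prefix_append _ _)

open Classical in
noncomputable def nxt (σ : List ℤ) : ℤ := if h : ∃ i, σ ++ [i] ∈ T then h.choose else 0

lemma nxt_spec (hT : IsPerfect T) {σ : List ℤ} (hσ : σ ∈ T) : σ ++ [nxt T σ] ∈ T := by
  have h := exists_succ T hT hσ
  rw [nxt, dif_pos h]
  exact h.choose_spec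

noncomputable def extC (σ : List ℤ) : ℕ → List ℤ
  | 0 => σ
  | m + 1 => extC σ m ++ [nxt T (extC σ m)]

@[simp] lemma length_extC (σ : List ℤ) (m : ℕ) : (extC T σ m).length = σ.length + m := by
  induction m with
  | zero => rfl
  | succ m ih => simp [extC, ih]; omega

lemma prefix_extC (σ : List ℤ) (m : ℕ) : σ <+: extC T σ m := by
  induction m with
  | zero => exact List.prefix_refl σ
  | succ m ih => exact ih.trans (List.prefix_append _ _)

lemma extC_add (σ : List ℤ) (m j : ℕ) : extC T σ (m + j) = extC T (extC T σ m) j := by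
  induction j with
  | zero => rfl
  | succ j ih => rw [← Nat.add_assoc, extC, ih]; rfl

lemma extC_mono (σ : List ℤ) {m m' : ℕ} (h : m ≤ m') : extC T σ m <+: extC T σ m' := by
  have : m' = m + (m' - m) := by omega
  rw [this, extC_add]
  exact prefix_extC T _ _

lemma extC_mem (hT : IsPerfect T) {σ : List ℤ} (hσ : σ ∈ T) (m : ℕ) : extC T σ m ∈ T := by
  induction m with
  | zero => exact hσ
  | succ m ih => exact nxt_spec T hT ih

noncomputable def extTo (σ : List ℤ) (d : ℕ) : List ℤ := extC T σ (d - σ.length)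

lemma length_extTo {σ : List ℤ} {d : ℕ} (h : σ.length ≤ d) : (extTo T σ d).length = d := by
  simp [extTo]; omega

lemma prefix_extTo (σ : List ℤ) (d : ℕ) : σ <+: extTo T σ d := prefix_extC T σ _

lemma extTo_mono (σ : List ℤ) {d d' : ℕ} (h : d ≤ d') : extTo T σ d <+: extTo T σ d' :=
  extC_mono T σ (by omega)

lemma extTo_mem (hT : IsPerfect T) {σ : List ℤ} (hσ : σ ∈ T) (d : ℕ) : extTo T σ d ∈ T :=
  extC_mem T hT hσ _

end Ext

/-! ### the kill construction -/

section Kill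
variable (T : Set (List ℤ))

/-- the sum pattern of a tuple of nodes, extended canonically to length d -/
noncomputable def qpat (t : List (List ℤ)) (d : ℕ) : List ℤ :=
  vsum d (t.map (fun e => extTo T e d))

lemma length_qpat {t : List (List ℤ)} {ℓ d : ℕ} (ht : ∀ e ∈ t, e.length = ℓ)
    (hd : ℓ ≤ d) : (qpat T t d).length = d := by
  apply length_vsum
  intro u hu
  obtain ⟨e, he, rfl⟩ := List.mem_map.1 hu
  exact length_extTo T (by rw [ht e he]; exact hd)

lemma prefix_qpat {t : List (List ℤ)} {d d' : ℕ} (h : d ≤ d') :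
    qpat T t d <+: qpat T t d' := by
  apply prefix_vsum h
  rw [List.forall₂_map_right_iff, List.forall₂_map_left_iff]
  apply List.forall₂_same.2
  intro e _
  exact extTo_mono T e h

def Good (Fk : Set (ℕ → ℤ)) (W : List ℤ) (t : List (List ℤ)) : Prop :=
  cyl (lsub W (qpat T t W.length)) ∩ Fk = ∅

noncomputable def kill1 (Fk : Set (ℕ → ℤ)) (t : List (List ℤ)) (W : List ℤ) : List ℤ :=
  let ξ := avoid Fk (lsub W (qpat T t W.length))
  ladd ξ (qpat T t ξ.length)

noncomputable def killW (Fk : Set (ℕ → ℤ)) : List (List (List ℤ)) → List ℤ → List ℤ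
  | [], W => W
  | t :: ts, W => killW Fk ts (kill1 T Fk t W)

lemma kill1_facts {Fk : Set (ℕ → ℤ)} {t : List (List ℤ)} {W : List ℤ} {ℓ : ℕ}
    (ht : ∀ e ∈ t, e.length = ℓ) (hW : ℓ ≤ W.length) :
    W <+: kill1 T Fk t W ∧ (kill1 T Fk t W).length = (avoid Fk (lsub W (qpat T t W.length))).length := by
  set φ := lsub W (qpat T t W.length) with hφ
  set ξ := avoid Fk φ with hξ
  have hqW : (qpat T t W.length).length = W.length := length_qpat T ht hW
  have hφlen : φ.length = W.length := by rw [hφ, length_lsub, hqW, min_self]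
  have hξlen : W.length ≤ ξ.length := by
    rw [← hφlen]; exact (avoid_prefix Fk φ).length_le
  have hqξ : (qpat T t ξ.length).length = ξ.length := length_qpat T ht (le_trans hW hξlen)
  constructor
  · have hWeq : W = ladd φ (qpat T t W.length) := by
      rw [hφ, ladd_lsub_cancel hqW.symm]
    conv_lhs => rw [hWeq]
    rw [kill1]
    exact prefix_ladd (avoid_prefix Fk φ) (prefix_qpat T hξlen)
  · rw [kill1, length_ladd, ← hξ, hqξ, min_self]

lemma kill1_good {Fk : Set (ℕ → ℤ)} (hcl : IsClosed Fk) (hnd : IsNowhereDense Fk)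
    {t : List (List ℤ)} {W : List ℤ} {ℓ : ℕ}
    (ht : ∀ e ∈ t, e.length = ℓ) (hW : ℓ ≤ W.length) :
    Good T Fk (kill1 T Fk t W) t := by
  set φ := lsub W (qpat T t W.length) with hφ
  set ξ := avoid Fk φ with hξ
  have hlen : (kill1 T Fk t W).length = ξ.length := (kill1_facts T ht hW).2
  have hqW : (qpat T t W.length).length = W.length := length_qpat T ht hW
  have hξlen : W.length ≤ ξ.length := by
    have : φ.length = W.length := by rw [hφ, length_lsub, hqW, min_self]
    rw [← this]; exact (avoid_prefix Fk φ).length_le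
  have hqξ : (qpat T t ξ.length).length = ξ.length := length_qpat T ht (le_trans hW hξlen)
  rw [Good, hlen]
  have : kill1 T Fk t W = ladd ξ (qpat T t ξ.length) := rfl
  rw [this, lsub_ladd_cancel (by rw [hqξ])]
  exact avoid_spec hcl hnd φ

lemma good_mono {Fk : Set (ℕ → ℤ)} {t : List (List ℤ)} {W W' : List ℤ} {ℓ : ℕ}
    (ht : ∀ e ∈ t, e.length = ℓ) (hW : ℓ ≤ W.length)
    (hpre : W <+: W') (hG : Good T Fk W t) : Good T Fk W' t := by
  rw [Good, Set.eq_empty_iff_forall_notMem]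
  intro y ⟨hy1, hy2⟩
  rw [Good, Set.eq_empty_iff_forall_notMem] at hG
  refine hG y ⟨?_, hy2⟩
  refine cyl_anti ?_ hy1
  exact prefix_lsub hpre (prefix_qpat T hpre.length_le)

lemma killW_facts {Fk : Set (ℕ → ℤ)} (hcl : IsClosed Fk) (hnd : IsNowhereDense Fk)
    {ℓ : ℕ} : ∀ (ts : List (List (List ℤ))) (W : List ℤ),
    (∀ t ∈ ts, ∀ e ∈ t, e.length = ℓ) → ℓ ≤ W.length →
    W <+: killW T Fk ts W ∧ ∀ t ∈ ts, Good T Fk (killW T Fk ts W) t := by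
  intro ts
  induction ts with
  | nil => intro W _ _; exact ⟨List.prefix_refl W, by simp⟩
  | cons t ts ih =>
    intro W hts hW
    have ht : ∀ e ∈ t, e.length = ℓ := hts t (List.mem_cons_self)
    have h1 := kill1_facts T (Fk := Fk) ht hW
    have hW1 : ℓ ≤ (kill1 T Fk t W).length := le_trans hW h1.1.length_le
    have ihs := ih (kill1 T Fk t W) (fun t' ht' => hts t' (List.mem_cons_of_mem _ ht')) hW1
    have hkw : killW T Fk (t :: ts) W = killW T Fk ts (kill1 T Fk t W) := rfl
    rw [hkw]
    refine ⟨h1.1.trans ihs.1, ?_⟩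
    intro t' ht'
    rcases List.mem_cons.1 ht' with rfl | ht'
    · exact good_mono T ht hW1 ihs.1 (kill1_good T hcl hnd ht hW)
    · exact ihs.2 t' ht'

end Kill



/-! ### the stage construction -/

def maxLen (l : List (List ℤ)) : ℕ := (l.map List.length).foldr max 0

lemma le_maxLen {l : List (List ℤ)} {u : List ℤ} (h : u ∈ l) : u.length ≤ maxLen l := by
  induction l with
  | nil => cases h
  | cons a l ih =>
    rcases List.mem_cons.1 h with rfl | h
    · exact le_max_left _ _
    · exact le_trans (ih h) (le_max_right _ _)

section Stage

variable (T : Set (List ℤ)) (C : ℕ → Set (ℕ → ℤ))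
  (O : List (List ℤ) → ℕ → List ℤ → List ℤ × ℤ × ℤ)

def OracleSpec : Prop := ∀ as b e, (∀ a ∈ as, a ∈ T) → e ∈ as →
    e <+: (O as b e).1 ∧ (O as b e).1 ++ [(O as b e).2.1] ∈ T ∧
    (O as b e).1 ++ [(O as b e).2.2] ∈ T ∧ (O as b e).2.1 ≠ (O as b e).2.2 ∧
    b ≤ (O as b e).1.length

def pairsOf (as : List (List ℤ)) (b : ℕ) : List (List ℤ) :=
  as.flatMap (fun e => [(O as b e).1 ++ [(O as b e).2.1], (O as b e).1 ++ [(O as b e).2.2]])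

/-- data of one stage: `ρ` the scheduled node, `k` the scheduled nwd set index,
`n` the scheduled number of summands, `st = (L, as)` the current state. -/
def bOf (ρ : List ℤ) (st : ℕ × List (List ℤ)) : ℕ := st.1 + ρ.length + 1

def prsOf (ρ : List ℤ) (st : ℕ × List (List ℤ)) : List (List ℤ) :=
  pairsOf O st.2 (bOf ρ st)

def lvlOf (ρ : List ℤ) (st : ℕ × List (List ℤ)) : ℕ := maxLen (prsOf O ρ st)

noncomputable def BOf (ρ : List ℤ) (st : ℕ × List (List ℤ)) : List (List ℤ) :=
  (prsOf O ρ st).map (fun u => extTo T u (lvlOf O ρ st))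

def tauOf (ρ : List ℤ) (st : ℕ × List (List ℤ)) : List ℤ :=
  ρ ++ List.replicate (lvlOf O ρ st - ρ.length) 0

noncomputable def WOf (k n : ℕ) (ρ : List ℤ) (st : ℕ × List (List ℤ)) : List ℤ :=
  killW T (C k) (tuples n (BOf T O ρ st)) (tauOf O ρ st)

noncomputable def stepD (k n : ℕ) (ρ : List ℤ) (st : ℕ × List (List ℤ)) :
    ℕ × List (List ℤ) :=
  ((WOf T C O k n ρ st).length,
    (BOf T O ρ st).map (fun u => extTo T u (WOf T C O k n ρ st).length))

variable {T C O}

section StepSpec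

variable {k n : ℕ} {ρ : List ℤ} {st : ℕ × List (List ℤ)}

lemma mem_prsOf (hO : OracleSpec T O) (hst : ∀ e ∈ st.2, e ∈ T ∧ e.length = st.1)
    {u : List ℤ} (hu : u ∈ prsOf O ρ st) :
    ∃ e ∈ st.2, e <+: u ∧ u ∈ T ∧ bOf ρ st < u.length := by
  rw [prsOf, pairsOf, List.mem_flatMap] at hu
  obtain ⟨e, he, hu⟩ := hu
  have hOs := hO st.2 (bOf ρ st) e (fun a ha => (hst a ha).1) he
  refine ⟨e, he, ?_⟩
  simp only [List.mem_cons, List.not_mem_nil, or_false] at hu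
  rcases hu with rfl | rfl
  · exact ⟨hOs.1.trans (List.prefix_append _ _), hOs.2.1, by simp; omega⟩
  · exact ⟨hOs.1.trans (List.prefix_append _ _), hOs.2.2.1, by simp; omega⟩

lemma mk_mem_prsOf {e : List ℤ} (he : e ∈ st.2) :
    (O st.2 (bOf ρ st) e).1 ++ [(O st.2 (bOf ρ st) e).2.1] ∈ prsOf O ρ st ∧
    (O st.2 (bOf ρ st) e).1 ++ [(O st.2 (bOf ρ st) e).2.2] ∈ prsOf O ρ st := by
  constructor <;> (rw [prsOf, pairsOf, List.mem_flatMap]; exact ⟨e, he, by simp⟩)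

lemma prsOf_ne_nil (hne : st.2 ≠ []) : prsOf O ρ st ≠ [] := by
  rcases List.exists_mem_of_ne_nil _ hne with ⟨e, he⟩
  intro h
  have := (mk_mem_prsOf (O := O) (ρ := ρ) he).1
  rw [h] at this
  simp at this

lemma lt_lvlOf (hO : OracleSpec T O) (hne : st.2 ≠ [])
    (hst : ∀ e ∈ st.2, e ∈ T ∧ e.length = st.1) : bOf ρ st < lvlOf O ρ st := by
  rcases List.exists_mem_of_ne_nil _ (prsOf_ne_nil (O := O) (ρ := ρ) hne) with ⟨u, hu⟩
  obtain ⟨e, -, -, -, hlen⟩ := mem_prsOf hO hst hu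
  exact lt_of_lt_of_le hlen (le_maxLen hu)

lemma rho_le_lvlOf (hO : OracleSpec T O) (hne : st.2 ≠ [])
    (hst : ∀ e ∈ st.2, e ∈ T ∧ e.length = st.1) : ρ.length ≤ lvlOf O ρ st := by
  have h := lt_lvlOf hO hne hst (ρ := ρ)
  rw [bOf] at h; omega

lemma fst_lt_lvlOf (hO : OracleSpec T O) (hne : st.2 ≠ [])
    (hst : ∀ e ∈ st.2, e ∈ T ∧ e.length = st.1) : st.1 < lvlOf O ρ st := by
  have h := lt_lvlOf hO hne hst (ρ := ρ)
  rw [bOf] at h; omega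

lemma mem_BOf (hO : OracleSpec T O) (hst : ∀ e ∈ st.2, e ∈ T ∧ e.length = st.1)
    {u' : List ℤ} (hu' : u' ∈ BOf T O ρ st) :
    u'.length = lvlOf O ρ st ∧ (∃ e ∈ st.2, e <+: u') ∧ (IsPerfect T → u' ∈ T) := by
  rw [BOf, List.mem_map] at hu'
  obtain ⟨u, hu, rfl⟩ := hu'
  obtain ⟨e, he, hpre, huT, hblen⟩ := mem_prsOf hO hst hu
  have hul : u.length ≤ lvlOf O ρ st := le_maxLen hu
  exact ⟨length_extTo T hul, ⟨e, he, hpre.trans (prefix_extTo T u _)⟩,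
    fun hT => extTo_mem T hT huT _⟩

lemma length_tauOf (hO : OracleSpec T O) (hne : st.2 ≠ [])
    (hst : ∀ e ∈ st.2, e ∈ T ∧ e.length = st.1) :
    (tauOf O ρ st).length = lvlOf O ρ st := by
  have := rho_le_lvlOf hO hne hst (ρ := ρ)
  rw [tauOf]; simp; omega

lemma tau_prefix_WOf (hC : ∀ k, IsClosed (C k) ∧ IsNowhereDense (C k))
    (hO : OracleSpec T O) (hne : st.2 ≠ [])
    (hst : ∀ e ∈ st.2, e ∈ T ∧ e.length = st.1) :
    tauOf O ρ st <+: WOf T C O k n ρ st := by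
  rw [WOf]
  refine (killW_facts T (hC k).1 (hC k).2 (ℓ := lvlOf O ρ st) _ _ ?_ ?_).1
  · intro t ht e he
    exact (mem_BOf hO hst ((mem_tuples.1 ht).2 e he)).1
  · rw [length_tauOf hO hne hst]

lemma lvl_le_WOf (hC : ∀ k, IsClosed (C k) ∧ IsNowhereDense (C k))
    (hO : OracleSpec T O) (hne : st.2 ≠ [])
    (hst : ∀ e ∈ st.2, e ∈ T ∧ e.length = st.1) :
    lvlOf O ρ st ≤ (WOf T C O k n ρ st).length := by
  have h := (tau_prefix_WOf (k := k) (n := n) (ρ := ρ) hC hO hne hst).length_le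
  rwa [length_tauOf hO hne hst] at h

lemma stepD_snd_mem (hT : IsPerfect T) (hC : ∀ k, IsClosed (C k) ∧ IsNowhereDense (C k))
    (hO : OracleSpec T O) (hne : st.2 ≠ [])
    (hst : ∀ e ∈ st.2, e ∈ T ∧ e.length = st.1)
    {e' : List ℤ} (he' : e' ∈ (stepD T C O k n ρ st).2) :
    e' ∈ T ∧ e'.length = (stepD T C O k n ρ st).1 ∧ ∃ u' ∈ BOf T O ρ st,
      u' <+: e' ∧ e' = extTo T u' (WOf T C O k n ρ st).length := by
  rw [stepD] at he' ⊢
  simp only [List.mem_map] at he'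
  obtain ⟨u', hu', rfl⟩ := he'
  obtain ⟨hlen, -, hmem⟩ := mem_BOf hO hst hu'
  have hl : u'.length ≤ (WOf T C O k n ρ st).length := by
    rw [hlen]; exact lvl_le_WOf (k := k) (n := n) (ρ := ρ) hC hO hne hst
  exact ⟨extTo_mem T hT (hmem hT) _, length_extTo T hl,
    u', hu', prefix_extTo T u' _, rfl⟩

lemma mem_stepD_of_mem_BOf {u' : List ℤ} (hu' : u' ∈ BOf T O ρ st) :
    extTo T u' (WOf T C O k n ρ st).length ∈ (stepD T C O k n ρ st).2 ∧
      u' <+: extTo T u' (WOf T C O k n ρ st).length := by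
  constructor
  · rw [stepD]; simp only [List.mem_map]; exact ⟨u', hu', rfl⟩
  · exact prefix_extTo T u' _

lemma stepD_progress (hO : OracleSpec T O)
    (hst : ∀ e ∈ st.2, e ∈ T ∧ e.length = st.1) {e : List ℤ} (he : e ∈ st.2) :
    ∃ e' ∈ (stepD T C O k n ρ st).2, e <+: e' := by
  have hOs := hO st.2 (bOf ρ st) e (fun a ha => (hst a ha).1) he
  have hpr := (mk_mem_prsOf (O := O) (ρ := ρ) he).1
  have hB : extTo T ((O st.2 (bOf ρ st) e).1 ++ [(O st.2 (bOf ρ st) e).2.1])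
      (lvlOf O ρ st) ∈ BOf T O ρ st := by
    rw [BOf, List.mem_map]; exact ⟨_, hpr, rfl⟩
  obtain ⟨hmem, hpre2⟩ := mem_stepD_of_mem_BOf (C := C) (k := k) (n := n) hB
  exact ⟨_, hmem, ((hOs.1.trans (List.prefix_append _ _)).trans (prefix_extTo T _ _)).trans
    hpre2⟩

lemma stepD_coherent (hO : OracleSpec T O)
    (hst : ∀ e ∈ st.2, e ∈ T ∧ e.length = st.1)
    {e' : List ℤ} (he' : e' ∈ (stepD T C O k n ρ st).2) :
    ∃ e ∈ st.2, e <+: e' := by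
  rw [stepD] at he'
  simp only [List.mem_map] at he'
  obtain ⟨u', hu', rfl⟩ := he'
  obtain ⟨-, ⟨e, he, hpree⟩, -⟩ := mem_BOf hO hst hu'
  exact ⟨e, he, hpree.trans (prefix_extTo T u' _)⟩

lemma stepD_split (hO : OracleSpec T O)
    (hst : ∀ e ∈ st.2, e ∈ T ∧ e.length = st.1) {e : List ℤ} (he : e ∈ st.2) :
    ∃ c i j, e <+: c ∧ i ≠ j ∧ (∃ e' ∈ (stepD T C O k n ρ st).2, c ++ [i] <+: e') ∧
      (∃ e' ∈ (stepD T C O k n ρ st).2, c ++ [j] <+: e') := by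
  have hOs := hO st.2 (bOf ρ st) e (fun a ha => (hst a ha).1) he
  obtain ⟨hpr1, hpr2⟩ := mk_mem_prsOf (O := O) (ρ := ρ) he
  refine ⟨(O st.2 (bOf ρ st) e).1, _, _, hOs.1, hOs.2.2.2.1, ?_, ?_⟩
  · have hB : extTo T ((O st.2 (bOf ρ st) e).1 ++ [(O st.2 (bOf ρ st) e).2.1])
        (lvlOf O ρ st) ∈ BOf T O ρ st := by
      rw [BOf, List.mem_map]; exact ⟨_, hpr1, rfl⟩
    obtain ⟨hmem, hpre2⟩ := mem_stepD_of_mem_BOf (C := C) (k := k) (n := n) hB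
    exact ⟨_, hmem, (prefix_extTo T _ _).trans hpre2⟩
  · have hB : extTo T ((O st.2 (bOf ρ st) e).1 ++ [(O st.2 (bOf ρ st) e).2.2])
        (lvlOf O ρ st) ∈ BOf T O ρ st := by
      rw [BOf, List.mem_map]; exact ⟨_, hpr2, rfl⟩
    obtain ⟨hmem, hpre2⟩ := mem_stepD_of_mem_BOf (C := C) (k := k) (n := n) hB
    exact ⟨_, hmem, (prefix_extTo T _ _).trans hpre2⟩

lemma stepD_kill (hT : IsPerfect T) (hC : ∀ k, IsClosed (C k) ∧ IsNowhereDense (C k))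
    (hO : OracleSpec T O) (hne : st.2 ≠ [])
    (hst : ∀ e ∈ st.2, e ∈ T ∧ e.length = st.1)
    {t : List (List ℤ)} (hlen : t.length = n)
    (hmem : ∀ x ∈ t, x ∈ (stepD T C O k n ρ st).2) :
    cyl (lsub (WOf T C O k n ρ st) (vsum (WOf T C O k n ρ st).length t)) ∩ C k = ∅ := by
  set ℓ := lvlOf O ρ st with hℓ
  set W := WOf T C O k n ρ st with hW
  have hgood := (killW_facts T (hC k).1 (hC k).2 (ℓ := ℓ)
    (tuples n (BOf T O ρ st)) (tauOf O ρ st)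
    (fun t' ht' e he => (mem_BOf hO hst ((mem_tuples.1 ht').2 e he)).1)
    (by rw [length_tauOf hO hne hst])).2
  have htake : ∀ x ∈ t, x.take ℓ ∈ BOf T O ρ st ∧ extTo T (x.take ℓ) W.length = x := by
    intro x hx
    obtain ⟨-, hxlen, u', hu', hpre, hxeq⟩ := stepD_snd_mem hT hC hO hne hst (hmem x hx)
    have h1 := (mem_BOf hO hst hu').1
    have ht2 : x.take ℓ = u' := by
      rw [List.prefix_iff_eq_take] at hpre
      rw [hℓ, ← h1]
      exact hpre.symm
    rw [ht2]
    exact ⟨hu', hxeq.symm⟩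
  have htB : t.map (fun x => List.take ℓ x) ∈ tuples n (BOf T O ρ st) := by
    rw [mem_tuples]
    refine ⟨by simpa using hlen, ?_⟩
    intro x hx
    rw [List.mem_map] at hx
    obtain ⟨x', hx', rfl⟩ := hx
    exact (htake x' hx').1
  have hG := hgood _ htB
  rw [Good] at hG
  rw [show killW T (C k) (tuples n (BOf T O ρ st)) (tauOf O ρ st) = W from rfl] at hG
  have hqeq : qpat T (t.map (fun x => List.take ℓ x)) W.length = vsum W.length t := by
    rw [qpat, List.map_map]
    conv_rhs => rw [← List.map_id t]
    congr 1
    apply List.map_congr_left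
    intro x hx
    exact (htake x hx).2
  rwa [hqeq] at hG

lemma stepD_rep {e' : List ℤ} (he' : e' ∈ (stepD T C O k n ρ st).2) :
    ∃ e ∈ st.2, ∃ x : ℤ,
      (x = (O st.2 (bOf ρ st) e).2.1 ∨ x = (O st.2 (bOf ρ st) e).2.2) ∧
      e' = extTo T (extTo T ((O st.2 (bOf ρ st) e).1 ++ [x]) (lvlOf O ρ st))
        (WOf T C O k n ρ st).length := by
  rw [stepD] at he'
  simp only [List.mem_map] at he'
  obtain ⟨u', hu', rfl⟩ := he'
  rw [BOf, List.mem_map] at hu'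
  obtain ⟨u, hu, rfl⟩ := hu'
  rw [prsOf, pairsOf, List.mem_flatMap] at hu
  obtain ⟨e, he, hu⟩ := hu
  simp only [List.mem_cons, List.not_mem_nil, or_false] at hu
  rcases hu with rfl | rfl
  · exact ⟨e, he, _, Or.inl rfl, rfl⟩
  · exact ⟨e, he, _, Or.inr rfl, rfl⟩

lemma mem_stepD_explicit {e : List ℤ} (he : e ∈ st.2) (x : ℤ)
    (hx : x = (O st.2 (bOf ρ st) e).2.1 ∨ x = (O st.2 (bOf ρ st) e).2.2) :
    ∃ e' ∈ (stepD T C O k n ρ st).2, (O st.2 (bOf ρ st) e).1 ++ [x] <+: e' := by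
  have hpr : (O st.2 (bOf ρ st) e).1 ++ [x] ∈ prsOf O ρ st := by
    rcases hx with rfl | rfl
    · exact (mk_mem_prsOf (O := O) (ρ := ρ) he).1
    · exact (mk_mem_prsOf (O := O) (ρ := ρ) he).2
  have hB : extTo T ((O st.2 (bOf ρ st) e).1 ++ [x]) (lvlOf O ρ st) ∈ BOf T O ρ st := by
    rw [BOf, List.mem_map]; exact ⟨_, hpr, rfl⟩
  obtain ⟨hmem, hpre2⟩ := mem_stepD_of_mem_BOf (C := C) (k := k) (n := n) hB
  exact ⟨_, hmem, (prefix_extTo T _ _).trans hpre2⟩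

end StepSpec

end Stage

/-! ### the global construction -/

section Global

variable (T : Set (List ℤ)) (C : ℕ → Set (ℕ → ℤ))
  (O : List (List ℤ) → ℕ → List ℤ → List ℤ × ℤ × ℤ) (sched : ℕ → ℕ × ℕ × List ℤ)

noncomputable def stSeq : ℕ → ℕ × List (List ℤ)
  | 0 => (0, [([] : List ℤ)])
  | s + 1 => stepD T C O (sched s).1 (sched s).2.1 (sched s).2.2 (stSeq s)

def Tp : Set (List ℤ) := {σ | ∃ s, ∃ e ∈ (stSeq T C O sched s).2, σ <+: e}

noncomputable def Wstage (s : ℕ) : List ℤ :=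
  WOf T C O (sched s).1 (sched s).2.1 (sched s).2.2 (stSeq T C O sched s)

def DSet (k n : ℕ) : Set (ℕ → ℤ) :=
  {z | ∀ s, (sched s).1 = k → (sched s).2.1 = n → z ∉ cyl (Wstage T C O sched s)}

variable {T C O sched}
variable (hT : IsPerfect T) (hC : ∀ k, IsClosed (C k) ∧ IsNowhereDense (C k))
  (hO : OracleSpec T O)

include hT hC hO

lemma stSeq_inv (s : ℕ) : (stSeq T C O sched s).2 ≠ [] ∧
    ∀ e ∈ (stSeq T C O sched s).2, e ∈ T ∧ e.length = (stSeq T C O sched s).1 := by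
  induction s with
  | zero =>
    refine ⟨by simp [stSeq], ?_⟩
    intro e he
    simp only [stSeq, List.mem_singleton] at he
    subst he
    obtain ⟨σ, hσ⟩ := hT.2.1
    exact ⟨hT.1 σ hσ [] (by simp), rfl⟩
  | succ s ih =>
    have hstep : (stSeq T C O sched (s+1)) =
        stepD T C O (sched s).1 (sched s).2.1 (sched s).2.2 (stSeq T C O sched s) := rfl
    constructor
    · rw [hstep, stepD]
      simp only [ne_eq, List.map_eq_nil_iff]
      rw [BOf]
      simp only [List.map_eq_nil_iff]
      exact prsOf_ne_nil ih.1
    · intro e he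
      rw [hstep] at he ⊢
      exact ⟨(stepD_snd_mem hT hC hO ih.1 ih.2 he).1, (stepD_snd_mem hT hC hO ih.1 ih.2 he).2.1⟩

lemma stSeq_fst_lt (s : ℕ) : (stSeq T C O sched s).1 < (stSeq T C O sched (s+1)).1 := by
  have ih := stSeq_inv (sched := sched) hT hC hO s
  have h1 := fst_lt_lvlOf (ρ := (sched s).2.2) hO ih.1 ih.2
  have h2 := lvl_le_WOf (k := (sched s).1) (n := (sched s).2.1) (ρ := (sched s).2.2) hC hO ih.1 ih.2
  exact lt_of_lt_of_le h1 h2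

lemma stSeq_fst_mono {s s' : ℕ} (h : s ≤ s') :
    (stSeq T C O sched s).1 ≤ (stSeq T C O sched s').1 := by
  induction s' with
  | zero => simp_all
  | succ s' ih =>
    rcases Nat.lt_succ_iff_lt_or_eq.1 (Nat.lt_succ_of_le h) with h' | rfl
    · exact le_trans (ih (by omega)) (le_of_lt (stSeq_fst_lt hT hC hO s'))
    · rfl

lemma le_stSeq_fst (s : ℕ) : s ≤ (stSeq T C O sched s).1 := by
  induction s with
  | zero => simp
  | succ s ih => exact lt_of_le_of_lt ih (stSeq_fst_lt hT hC hO s)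

lemma stSeq_up {s s' : ℕ} (h : s ≤ s') {e : List ℤ} (he : e ∈ (stSeq T C O sched s).2) :
    ∃ e' ∈ (stSeq T C O sched s').2, e <+: e' := by
  induction s' with
  | zero =>
    have : s = 0 := by omega
    subst this
    exact ⟨e, he, List.prefix_refl e⟩
  | succ s' ih =>
    rcases Nat.lt_succ_iff_lt_or_eq.1 (Nat.lt_succ_of_le h) with h' | rfl
    · obtain ⟨e'', he'', hpre⟩ := ih (by omega)
      have inv := stSeq_inv (sched := sched) hT hC hO s'
      obtain ⟨e', he', hpre'⟩ := stepD_progress (k := (sched s').1) (n := (sched s').2.1)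
        (ρ := (sched s').2.2) hO inv.2 he''
      exact ⟨e', he', hpre.trans hpre'⟩
    · exact ⟨e, he, List.prefix_refl e⟩

lemma stSeq_down {s s' : ℕ} (h : s ≤ s') {e' : List ℤ} (he' : e' ∈ (stSeq T C O sched s').2) :
    ∃ e ∈ (stSeq T C O sched s).2, e <+: e' := by
  induction s' generalizing e' with
  | zero =>
    have : s = 0 := by omega
    subst this
    exact ⟨e', he', List.prefix_refl e'⟩
  | succ s' ih =>
    rcases Nat.lt_succ_iff_lt_or_eq.1 (Nat.lt_succ_of_le h) with h' | rfl
    · have inv := stSeq_inv (sched := sched) hT hC hO s'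
      obtain ⟨e'', he'', hpre⟩ := stepD_coherent hO inv.2 he'
      obtain ⟨e, he, hpre'⟩ := ih (by omega) he''
      exact ⟨e, he, hpre'.trans hpre⟩
    · exact ⟨e', he', List.prefix_refl e'⟩

lemma node_lift {σ : List ℤ} (hσ : σ ∈ Tp T C O sched) (s : ℕ)
    (hlen : σ.length ≤ (stSeq T C O sched s).1) :
    ∃ e ∈ (stSeq T C O sched s).2, σ <+: e := by
  obtain ⟨s₀, e₀, he₀, hpre₀⟩ := hσ
  rcases le_or_gt s₀ s with h | h
  · obtain ⟨e', he', hpre'⟩ := stSeq_up hT hC hO h he₀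
    exact ⟨e', he', hpre₀.trans hpre'⟩
  · obtain ⟨e, he, hpre⟩ := stSeq_down hT hC hO (le_of_lt h) he₀
    have hel : e.length = (stSeq T C O sched s).1 :=
      ((stSeq_inv (sched := sched) hT hC hO s).2 e he).2
    refine ⟨e, he, List.prefix_of_prefix_length_le hpre₀ hpre (by omega)⟩

lemma node_at_level {σ : List ℤ} (hσ : σ ∈ Tp T C O sched) (s : ℕ)
    (hlen : σ.length = (stSeq T C O sched s).1) : σ ∈ (stSeq T C O sched s).2 := by
  obtain ⟨e, he, hpre⟩ := node_lift hT hC hO hσ s (le_of_eq hlen)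
  have hel : e.length = (stSeq T C O sched s).1 :=
    ((stSeq_inv (sched := sched) hT hC hO s).2 e he).2
  rwa [hpre.eq_of_length (by omega)]

omit hT hC hO in
lemma Tp_tree : IsTree (Tp T C O sched) := by
  rintro σ ⟨s, e, he, hpre⟩ τ hτ
  exact ⟨s, e, he, hτ.trans hpre⟩

lemma Tp_subset : Tp T C O sched ⊆ T := by
  rintro σ ⟨s, e, he, hpre⟩
  exact hT.1 e ((stSeq_inv (sched := sched) hT hC hO s).2 e he).1 σ hpre

lemma Tp_perfect : IsPerfect (Tp T C O sched) := by
  refine ⟨Tp_tree, ⟨[], 0, [], by simp [stSeq], by simp⟩, ?_⟩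
  rintro σ ⟨s, e, he, hpre⟩
  have inv := stSeq_inv (sched := sched) hT hC hO s
  obtain ⟨c, i, j, hec, hij, ⟨e₁, he₁, hpre₁⟩, ⟨e₂, he₂, hpre₂⟩⟩ :=
    stepD_split (k := (sched s).1) (n := (sched s).2.1) (ρ := (sched s).2.2) hO inv.2 he
  have hc1 : c ++ [i] ∈ Tp T C O sched := ⟨s + 1, e₁, he₁, hpre₁⟩
  have hc2 : c ++ [j] ∈ Tp T C O sched := ⟨s + 1, e₂, he₂, hpre₂⟩
  exact ⟨c, Tp_tree _ hc1 c (by simp), hpre.trans hec, i, j, hij, hc1, hc2⟩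

lemma branches_at_level {x : ℕ → ℤ} (hx : x ∈ branches (Tp T C O sched)) (s : ℕ) :
    res x ((stSeq T C O sched s).1) ∈ (stSeq T C O sched s).2 :=
  node_at_level hT hC hO (hx _) s (by simp)

/-- the key covering property -/
lemma mem_DSet {k n : ℕ} {f : ℕ → ℤ} (hf : f ∈ C k) {xs : List (ℕ → ℤ)}
    (hxs : ∀ x ∈ xs, x ∈ branches (Tp T C O sched)) (hlen : xs.length = n) :
    f + xs.sum ∈ DSet T C O sched k n := by
  intro s hk hn hcyl
  set st := stSeq T C O sched s with hst
  have inv := stSeq_inv (sched := sched) hT hC hO s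
  set W := Wstage T C O sched s with hWs
  have hWd : W = WOf T C O (sched s).1 (sched s).2.1 (sched s).2.2 st := rfl
  set d := W.length with hd
  -- the nodes of the branches at level d
  have hlev : ∀ x ∈ xs, res x d ∈ (stepD T C O (sched s).1 (sched s).2.1 (sched s).2.2 st).2 := by
    intro x hx
    have h1 := branches_at_level hT hC hO (hxs x hx) (s + 1)
    have h2 : (stSeq T C O sched (s+1)) =
        stepD T C O (sched s).1 (sched s).2.1 (sched s).2.2 st := rfl
    rw [h2] at h1
    have h3 : (stepD T C O (sched s).1 (sched s).2.1 (sched s).2.2 st).1 = d := rfl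
    rwa [h3] at h1
  have hkill := stepD_kill (k := (sched s).1) (n := (sched s).2.1) (ρ := (sched s).2.2)
    hT hC hO inv.1 inv.2 (t := xs.map (fun x => res x d)) (by simp [hlen, hn])
    (by intro t ht; rw [List.mem_map] at ht; obtain ⟨x, hx, rfl⟩ := ht; exact hlev x hx)
  rw [← hWd] at hkill
  -- f is in the killed cylinder
  have hres : res f d = lsub W (vsum d (xs.map (fun x => res x d))) := by
    have h1 : res f d = lsub (res (f + xs.sum) d) (res xs.sum d) :=
      res_sub_of_add rfl d
    have hW' : res (f + xs.sum) d = W := hcyl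
    rw [h1, hW', res_listSum]
  have hfc : f ∈ cyl (lsub W (vsum d (xs.map (fun x => res x d)))) := by
    rw [← hres]
    exact mem_cyl_res f d
  rw [Set.eq_empty_iff_forall_notMem] at hkill
  rw [← hk] at hf
  exact hkill f ⟨hfc, hf⟩

lemma rho_prefix_Wstage (s : ℕ) : (sched s).2.2 <+: Wstage T C O sched s := by
  have inv := stSeq_inv (sched := sched) hT hC hO s
  have h1 : (sched s).2.2 <+: tauOf O (sched s).2.2 (stSeq T C O sched s) := by
    rw [tauOf]; exact List.prefix_append _ _
  exact h1.trans (tau_prefix_WOf (k := (sched s).1) (n := (sched s).2.1) hC hO inv.1 inv.2)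

lemma DSet_meagre (hsched : ∀ v : ℕ × ℕ × List ℤ, ∃ s, sched s = v) (k n : ℕ) :
    IsMeagre (DSet T C O sched k n) := by
  have hD : DSet T C O sched k n =
      (⋃ (s : ℕ) (_ : (sched s).1 = k ∧ (sched s).2.1 = n), cyl (Wstage T C O sched s))ᶜ := by
    ext z
    constructor
    · intro h hmem
      obtain ⟨s, hcond, hz⟩ := Set.mem_iUnion₂.1 hmem
      exact h s hcond.1 hcond.2 hz
    · intro h s h1 h2 hz
      exact h (Set.mem_iUnion₂.2 ⟨s, ⟨h1, h2⟩, hz⟩)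
  have hop : IsOpen (⋃ (s : ℕ) (_ : (sched s).1 = k ∧ (sched s).2.1 = n),
      cyl (Wstage T C O sched s)) :=
    isOpen_iUnion fun s => isOpen_iUnion fun _ => isOpen_cyl _
  have hcl : IsClosed (DSet T C O sched k n) := by rw [hD]; exact hop.isClosed_compl
  have hdense : Dense (DSet T C O sched k n)ᶜ := by
    rw [hD, compl_compl]
    rw [dense_iff_inter_open]
    intro U hU ⟨x, hx⟩
    obtain ⟨m, hm⟩ := exists_cyl_subset hU hx
    obtain ⟨s, hs⟩ := hsched (k, n, res x m)
    have h1 : (sched s).1 = k := by rw [hs]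
    have h2 : (sched s).2.1 = n := by rw [hs]
    have h3 : (sched s).2.2 = res x m := by rw [hs]
    obtain ⟨y, hy⟩ := cyl_nonempty (Wstage T C O sched s)
    have hpre : res x m <+: Wstage T C O sched s := by
      rw [← h3]; exact rho_prefix_Wstage hT hC hO s
    refine ⟨y, ?_, ?_⟩
    · exact hm (cyl_anti hpre hy)
    · exact Set.mem_iUnion.2 ⟨s, Set.mem_iUnion.2 ⟨⟨h1, h2⟩, hy⟩⟩
  have hnwd : IsNowhereDense (DSet T C O sched k n) := by
    rw [hcl.isNowhereDense_iff, interior_eq_empty_iff_dense_compl]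
    exact hdense
  rw [isMeagre_iff_countable_union_isNowhereDense]
  exact ⟨{DSet T C O sched k n}, by simpa using hnwd, Set.countable_singleton _,
    by simp⟩

lemma iterSum_subset (F : Set (ℕ → ℤ)) (hF : F ⊆ ⋃ k, C k) (n : ℕ) :
    iterSum F (branches (Tp T C O sched)) n ⊆ ⋃ k, DSet T C O sched k n := by
  intro z hz
  obtain ⟨f, hf, xs, hlen, hmem, rfl⟩ := iterSum_rep hz
  obtain ⟨k, hk⟩ := Set.mem_iUnion.1 (hF hf)
  exact Set.mem_iUnion.2 ⟨k, mem_DSet hT hC hO hk hmem hlen⟩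

theorem generic_main (hsched : ∀ v : ℕ × ℕ × List ℤ, ∃ s, sched s = v) :
    Tp T C O sched ⊆ T ∧ IsPerfect (Tp T C O sched) ∧
    ∀ F : Set (ℕ → ℤ), F ⊆ ⋃ k, C k → ∀ n : ℕ,
      IsMeagre (iterSum F (branches (Tp T C O sched)) n) := by
  refine ⟨Tp_subset hT hC hO, Tp_perfect hT hC hO, ?_⟩
  intro F hF n
  refine IsMeagre.mono (iterSum_subset hT hC hO F hF n) ?_
  exact isMeagre_iUnion fun k => DSet_meagre hT hC hO hsched k n

section Unif

variable (T C O sched) in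
def SL : Set ℕ := {m | ∃ s, ∃ e ∈ (stSeq T C O sched s).2,
  m = (O (stSeq T C O sched s).2 (bOf (sched s).2.2 (stSeq T C O sched s)) e).1.length}

variable (T O) in
def UnifSpec : Prop := ∀ as b e e', (∀ a ∈ as, a ∈ T) → e ∈ as → e' ∈ as →
  (O as b e).1.length = (O as b e').1.length

lemma FD (hOU : UnifSpec T O) (s : ℕ) :
    ∀ e₁ ∈ (stSeq T C O sched s).2, ∀ e₂ ∈ (stSeq T C O sched s).2,
    ∀ m, ∀ (h₁ : m < e₁.length) (h₂ : m < e₂.length),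
    (∀ p (hp₁ : p < e₁.length) (hp₂ : p < e₂.length), p < m → e₁[p] = e₂[p]) →
    e₁[m] ≠ e₂[m] → m ∈ SL T C O sched := by
  induction s with
  | zero =>
    intro e₁ he₁ e₂ he₂ m h₁ h₂ _ _
    simp only [stSeq, List.mem_singleton] at he₁
    subst he₁
    simp at h₁
  | succ s ih =>
    intro e₁' he₁' e₂' he₂' m h₁ h₂ hagree hdiff
    have inv := stSeq_inv (sched := sched) hT hC hO s
    have hrw : stSeq T C O sched (s+1) =
        stepD T C O (sched s).1 (sched s).2.1 (sched s).2.2 (stSeq T C O sched s) := rfl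
    rw [hrw] at he₁' he₂'
    set st := stSeq T C O sched s with hstdef
    set b := bOf (sched s).2.2 st with hbdef
    obtain ⟨e₁, he₁, x₁, hx₁, heq₁⟩ := stepD_rep he₁'
    obtain ⟨e₂, he₂, x₂, hx₂, heq₂⟩ := stepD_rep he₂'
    set c₁ := (O st.2 b e₁).1 with hc₁def
    set c₂ := (O st.2 b e₂).1 with hc₂def
    have hc₁pre : c₁ ++ [x₁] <+: e₁' := by
      rw [heq₁]; exact (prefix_extTo T _ _).trans (prefix_extTo T _ _)
    have hc₂pre : c₂ ++ [x₂] <+: e₂' := by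
      rw [heq₂]; exact (prefix_extTo T _ _).trans (prefix_extTo T _ _)
    have hO₁ := hO st.2 b e₁ (fun a ha => (inv.2 a ha).1) he₁
    have hO₂ := hO st.2 b e₂ (fun a ha => (inv.2 a ha).1) he₂
    have he₁pre : e₁ <+: e₁' := hO₁.1.trans ((List.prefix_append c₁ [x₁]).trans hc₁pre)
    have he₂pre : e₂ <+: e₂' := hO₂.1.trans ((List.prefix_append c₂ [x₂]).trans hc₂pre)
    have hlen₁ : e₁.length = st.1 := (inv.2 e₁ he₁).2
    have hlen₂ : e₂.length = st.1 := (inv.2 e₂ he₂).2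
    rcases lt_or_ge m st.1 with hmL | hmL
    · -- first difference below the previous level
      have hm₁ : m < e₁.length := by omega
      have hm₂ : m < e₂.length := by omega
      refine ih e₁ he₁ e₂ he₂ m hm₁ hm₂ ?_ ?_
      · intro p hp₁ hp₂ hpm
        rw [he₁pre.getElem hp₁, he₂pre.getElem hp₂]
        exact hagree p (by omega) (by omega) hpm
      · intro hEq
        apply hdiff
        rw [← he₁pre.getElem hm₁, ← he₂pre.getElem hm₂, hEq]
    · -- the two nodes at the previous level coincide
      have hee : e₁ = e₂ := by
        apply List.ext_getElem (by omega)
        intro p hp₁ hp₂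
        rw [he₁pre.getElem hp₁, he₂pre.getElem hp₂]
        exact hagree p (by omega) (by omega) (by omega)
      subst hee
      have hcc : c₁ = c₂ := rfl
      rw [← hcc] at hc₂pre
      by_cases hxx : x₁ = x₂
      · exfalso
        apply hdiff
        have : e₁' = e₂' := by rw [heq₁, heq₂, hxx]
        exact List.getElem_of_eq this h₁
      · rcases lt_trichotomy m c₁.length with hm | hm | hm
        · -- below the split point: equal values, contradiction
          exfalso
          apply hdiff
          have hcp₁ : c₁ <+: e₁' := (List.prefix_append c₁ [x₁]).trans hc₁pre
          have hcp₂ : c₁ <+: e₂' := (List.prefix_append c₁ [x₂]).trans hc₂pre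
          rw [← hcp₁.getElem hm, ← hcp₂.getElem hm]
        · -- at the split point: this is a splitting level
          exact ⟨s, e₁, he₁, hm⟩
        · -- above the split point: the agreement forces x₁ = x₂
          exfalso
          apply hxx
          have hb₁ : c₁.length < (c₁ ++ [x₁]).length := by simp
          have hb₂ : c₁.length < (c₁ ++ [x₂]).length := by simp
          have h1 : e₁'[c₁.length]'(lt_of_lt_of_le hb₁ hc₁pre.length_le) = x₁ := by
            rw [← hc₁pre.getElem hb₁]; simp
          have h2 : e₂'[c₁.length]'(lt_of_lt_of_le hb₂ hc₂pre.length_le) = x₂ := by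
            rw [← hc₂pre.getElem hb₂]; simp
          rw [← h1, ← h2]
          exact hagree c₁.length (by omega) (by omega) hm

lemma Tp_unif (hOU : UnifSpec T O) (m : ℕ) :
    (∀ σ ∈ Tp T C O sched, σ.length = m → Splits (Tp T C O sched) σ) ∨
    (∀ σ ∈ Tp T C O sched, σ.length = m → ¬ Splits (Tp T C O sched) σ) := by
  by_cases hm : m ∈ SL T C O sched
  · left
    obtain ⟨s, e, he, hme⟩ := hm
    intro σ hσ hσm
    have inv := stSeq_inv (sched := sched) hT hC hO s
    have hrw : stSeq T C O sched (s+1) =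
        stepD T C O (sched s).1 (sched s).2.1 (sched s).2.2 (stSeq T C O sched s) := rfl
    set st := stSeq T C O sched s with hstdef
    set b := bOf (sched s).2.2 st with hbdef
    -- m is below the next level
    have hc1 : (O st.2 b e).1 ++ [(O st.2 b e).2.1] ∈ prsOf O (sched s).2.2 st :=
      (mk_mem_prsOf (O := O) he).1
    have hml : ((O st.2 b e).1 ++ [(O st.2 b e).2.1]).length ≤ lvlOf O (sched s).2.2 st :=
      le_maxLen hc1
    have hlW := lvl_le_WOf (k := (sched s).1) (n := (sched s).2.1) (ρ := (sched s).2.2)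
      hC hO inv.1 inv.2
    have hmlt : m ≤ (stSeq T C O sched (s+1)).1 := by
      have h3 : (stSeq T C O sched (s+1)).1 =
          (WOf T C O (sched s).1 (sched s).2.1 (sched s).2.2 st).length := rfl
      simp only [List.length_append, List.length_cons, List.length_nil] at hml
      omega
    obtain ⟨e'', he'', hpre''⟩ := node_lift hT hC hO hσ (s+1) (by omega)
    rw [hrw] at he''
    obtain ⟨e₂, he₂, x₂, hx₂, heq₂⟩ := stepD_rep he''
    have hc₂pre : (O st.2 b e₂).1 ++ [x₂] <+: e'' := by
      rw [heq₂]; exact (prefix_extTo T _ _).trans (prefix_extTo T _ _)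
    have hc₂len : (O st.2 b e₂).1.length = m := by
      rw [hme]
      exact hOU st.2 b e₂ e (fun a ha => (inv.2 a ha).1) he₂ he
    have hσc : σ = (O st.2 b e₂).1 := by
      have hp : (O st.2 b e₂).1 <+: e'' :=
        (List.prefix_append _ _).trans hc₂pre
      exact (List.prefix_of_prefix_length_le hpre'' hp (by omega)).eq_of_length (by omega)
    have hO₂ := hO st.2 b e₂ (fun a ha => (inv.2 a ha).1) he₂
    obtain ⟨m₁, hm₁, hp₁⟩ := mem_stepD_explicit (C := C) (k := (sched s).1)
      (n := (sched s).2.1) he₂ (O st.2 b e₂).2.1 (Or.inl rfl)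
    obtain ⟨m₂, hm₂, hp₂⟩ := mem_stepD_explicit (C := C) (k := (sched s).1)
      (n := (sched s).2.1) he₂ (O st.2 b e₂).2.2 (Or.inr rfl)
    rw [hσc]
    exact ⟨(O st.2 b e₂).2.1, (O st.2 b e₂).2.2, hO₂.2.2.2.1,
      ⟨s+1, m₁, by rw [hrw]; exact hm₁, hp₁⟩, ⟨s+1, m₂, by rw [hrw]; exact hm₂, hp₂⟩⟩
  · right
    intro σ hσ hσm hsplit
    obtain ⟨a, a', haa, ha, ha'⟩ := hsplit
    have hL : m + 1 ≤ (stSeq T C O sched (m+1)).1 := le_stSeq_fst hT hC hO (m+1)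
    obtain ⟨e₁, he₁, hp₁⟩ := node_lift hT hC hO ha (m+1) (by simp [hσm]; omega)
    obtain ⟨e₂, he₂, hp₂⟩ := node_lift hT hC hO ha' (m+1) (by simp [hσm]; omega)
    have hl₁ : e₁.length = (stSeq T C O sched (m+1)).1 :=
      ((stSeq_inv (sched := sched) hT hC hO (m+1)).2 e₁ he₁).2
    have hl₂ : e₂.length = (stSeq T C O sched (m+1)).1 :=
      ((stSeq_inv (sched := sched) hT hC hO (m+1)).2 e₂ he₂).2
    have hb₁ : m < (σ ++ [a]).length := by simp [hσm]
    have hb₂ : m < (σ ++ [a']).length := by simp [hσm]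
    apply hm
    refine FD hT hC hO hOU (m+1) e₁ he₁ e₂ he₂ m (by omega) (by omega) ?_ ?_
    · intro p hq₁ hq₂ hpm
      have hpσ : p < σ.length := by omega
      have hc₁ : p < (σ ++ [a]).length := by simp; omega
      have hc₂ : p < (σ ++ [a']).length := by simp; omega
      rw [← hp₁.getElem hc₁, ← hp₂.getElem hc₂,
        List.getElem_append_left hpσ, List.getElem_append_left hpσ]
    · have h1 : e₁[m]'(by omega) = a := by
        rw [← hp₁.getElem hb₁]
        simp [hσm]
      have h2 : e₂[m]'(by omega) = a' := by
        rw [← hp₂.getElem hb₂]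
        simp [hσm]
      rw [h1, h2]
      exact haa

end Unif

end Global

/-! ### concrete oracles -/

section Oracles
variable (T : Set (List ℤ))

lemma nil_mem (hT : IsPerfect T) : [] ∈ T := by
  obtain ⟨σ, hσ⟩ := hT.2.1
  exact hT.1 σ hσ [] (by simp)

lemma le_length_extTo (σ : List ℤ) (b : ℕ) : b ≤ (extTo T σ b).length := by
  rw [extTo, length_extC]; omega

open Classical in
noncomputable def splExt (σ : List ℤ) : List ℤ :=
  if h : ∃ τ, τ ∈ T ∧ σ <+: τ ∧ Splits T τ then h.choose else σ

lemma splExt_spec (hT : IsPerfect T) {σ : List ℤ} (hσ : σ ∈ T) :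
    splExt T σ ∈ T ∧ σ <+: splExt T σ ∧ Splits T (splExt T σ) := by
  have h : ∃ τ, τ ∈ T ∧ σ <+: τ ∧ Splits T τ := by
    obtain ⟨τ, h1, h2, h3⟩ := hT.2.2 σ hσ
    exact ⟨τ, h1, h2, h3⟩
  rw [splExt, dif_pos h]
  exact h.choose_spec

open Classical in
noncomputable def succ2 (c : List ℤ) : ℤ × ℤ :=
  if h : ∃ i j : ℤ, i ≠ j ∧ c ++ [i] ∈ T ∧ c ++ [j] ∈ T
  then (h.choose, h.choose_spec.choose) else (0, 0)

lemma succ2_spec {c : List ℤ} (h : Splits T c) :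
    (succ2 T c).1 ≠ (succ2 T c).2 ∧ c ++ [(succ2 T c).1] ∈ T ∧ c ++ [(succ2 T c).2] ∈ T := by
  have h' : ∃ i j : ℤ, i ≠ j ∧ c ++ [i] ∈ T ∧ c ++ [j] ∈ T := h
  rw [succ2, dif_pos h']
  exact h'.choose_spec.choose_spec

noncomputable def gOr : List (List ℤ) → ℕ → List ℤ → List ℤ × ℤ × ℤ := fun _ b e =>
  (splExt T (extTo T e b),
   (succ2 T (splExt T (extTo T e b))).1, (succ2 T (splExt T (extTo T e b))).2)

lemma gOr_spec (hT : IsPerfect T) : OracleSpec T (gOr T) := by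
  intro as b e hmem he
  have heT : e ∈ T := hmem e he
  have hext : extTo T e b ∈ T := extTo_mem T hT heT b
  obtain ⟨h1, h2, h3⟩ := splExt_spec T hT hext
  obtain ⟨h4, h5, h6⟩ := succ2_spec T h3
  exact ⟨(prefix_extTo T e b).trans h2, h5, h6, h4,
    le_trans (le_length_extTo T e b) h2.length_le⟩

noncomputable def uOr : List (List ℤ) → ℕ → List ℤ → List ℤ × ℤ × ℤ := fun as b e =>
  (extTo T e (splExt T (extTo T [] (max b (maxLen as)))).length,
   (succ2 T (extTo T e (splExt T (extTo T [] (max b (maxLen as)))).length)).1,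
   (succ2 T (extTo T e (splExt T (extTo T [] (max b (maxLen as)))).length)).2)

lemma uOr_facts (hTU : IsUniformlyPerfect T) (as : List (List ℤ)) (b : ℕ) (e : List ℤ)
    (hmem : ∀ a ∈ as, a ∈ T) (he : e ∈ as) :
    (uOr T as b e).1 = extTo T e (splExt T (extTo T [] (max b (maxLen as)))).length ∧
    (uOr T as b e).1.length = (splExt T (extTo T [] (max b (maxLen as)))).length ∧
    Splits T (uOr T as b e).1 ∧ (uOr T as b e).1 ∈ T ∧
    b ≤ (uOr T as b e).1.length := by
  have hT := hTU.1
  set b' := max b (maxLen as) with hb'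
  have h0 : extTo T [] b' ∈ T := extTo_mem T hT (nil_mem T hT) b'
  obtain ⟨hc0T, hc0pre, hc0spl⟩ := splExt_spec T hT h0
  set ℓ' := (splExt T (extTo T [] b')).length with hℓ'
  have hb'ℓ : b' ≤ ℓ' := le_trans (le_length_extTo T [] b') hc0pre.length_le
  have heln : e.length ≤ ℓ' := le_trans (le_maxLen he) (le_trans (le_max_right _ _) hb'ℓ)
  have hcT : extTo T e ℓ' ∈ T := extTo_mem T hT (hmem e he) ℓ'
  have hclen : (extTo T e ℓ').length = ℓ' := length_extTo T heln
  have hall : ∀ σ ∈ T, σ.length = ℓ' → Splits T σ := by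
    rcases hTU.2 ℓ' with h | h
    · exact h
    · exact absurd hc0spl (h _ hc0T rfl)
  have hspl : Splits T (extTo T e ℓ') := hall _ hcT hclen
  exact ⟨rfl, hclen, hspl, hcT, le_trans (le_trans (le_max_left _ _) hb'ℓ) hclen.ge⟩

lemma uOr_spec (hTU : IsUniformlyPerfect T) : OracleSpec T (uOr T) := by
  intro as b e hmem he
  obtain ⟨hc, hclen, hspl, hcT, hble⟩ := uOr_facts T hTU as b e hmem he
  obtain ⟨h4, h5, h6⟩ := succ2_spec T hspl
  have hpre : e <+: (uOr T as b e).1 := by rw [hc]; exact prefix_extTo T e _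
  exact ⟨hpre, h5, h6, h4, hble⟩

lemma uOr_unif (hTU : IsUniformlyPerfect T) (as : List (List ℤ)) (b : ℕ) (e e' : List ℤ)
    (hmem : ∀ a ∈ as, a ∈ T) (he : e ∈ as) (he' : e' ∈ as) :
    (uOr T as b e).1.length = (uOr T as b e').1.length := by
  rw [(uOr_facts T hTU as b e hmem he).2.1, (uOr_facts T hTU as b e' hmem he').2.1]

end Oracles

/-! ### part 1 -/

noncomputable def schedStd : ℕ → ℕ × ℕ × List ℤ :=
  (Denumerable.eqv (ℕ × ℕ × List ℤ)).symm

lemma schedStd_surj : ∀ v : ℕ × ℕ × List ℤ, ∃ s, schedStd s = v := fun v =>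
  ⟨Denumerable.eqv (ℕ × ℕ × List ℤ) v, Equiv.symm_apply_apply _ v⟩

theorem part1 (F : Set (ℕ → ℤ)) (T : Set (List ℤ)) (hF : IsMeagre F) (hT : IsPerfect T) :
    ∃ T' : Set (List ℤ), T' ⊆ T ∧ IsPerfect T' ∧
      ∀ n : ℕ, 1 ≤ n → IsMeagre (iterSum F (branches T') n) := by
  obtain ⟨C, hC, hFC⟩ := meager_decomp hF
  obtain ⟨h1, h2, h3⟩ := generic_main hT hC (gOr_spec T hT) (sched := schedStd) schedStd_surj
  exact ⟨Tp T C (gOr T) schedStd, h1, h2, fun n _ => h3 F hFC n⟩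

theorem part2 (F : Set (ℕ → ℤ)) (T : Set (List ℤ)) (hF : IsMeagre F)
    (hTU : IsUniformlyPerfect T) :
    ∃ T' : Set (List ℤ), T' ⊆ T ∧ IsUniformlyPerfect T' ∧
      ∀ n : ℕ, 1 ≤ n → IsMeagre (iterSum F (branches T') n) := by
  have hT := hTU.1
  obtain ⟨C, hC, hFC⟩ := meager_decomp hF
  have hO := uOr_spec T hTU
  have hOU : UnifSpec T (uOr T) := fun as b e e' hmem he he' =>
    uOr_unif T hTU as b e e' hmem he he'
  obtain ⟨h1, h2, h3⟩ := generic_main hT hC hO (sched := schedStd) schedStd_surj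
  exact ⟨Tp T C (uOr T) schedStd, h1, ⟨h2, Tp_unif hT hC hO hOU⟩,
    fun n _ => h3 F hFC n⟩

theorem stmt6' :
    (∀ F : Set (ℕ → ℤ), ∀ T : Set (List ℤ), IsMeagre F → IsPerfect T →
      ∃ T' : Set (List ℤ), T' ⊆ T ∧ IsPerfect T' ∧
        ∀ n : ℕ, 1 ≤ n → IsMeagre (iterSum F (branches T') n)) ∧
    (∀ F : Set (ℕ → ℤ), ∀ T : Set (List ℤ), IsMeagre F → IsUniformlyPerfect T →
      ∃ T' : Set (List ℤ), T' ⊆ T ∧ IsUniformlyPerfect T' ∧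
        ∀ n : ℕ, 1 ≤ n → IsMeagre (iterSum F (branches T') n)) :=
  ⟨part1, part2⟩

end Stmt6

/-- For meager `F` and a (uniformly) perfect tree `T` there is a
(uniformly) perfect `T' ⊆ T` with all `n`-fold sums `F + [T'] + ⋯ + [T']` meager. -/
theorem stmt6 :
    (∀ F : Set (ℕ → ℤ), ∀ T : Set (List ℤ), IsMeagre F → IsPerfect T →
      ∃ T' : Set (List ℤ), T' ⊆ T ∧ IsPerfect T' ∧
        ∀ n : ℕ, 1 ≤ n → IsMeagre (iterSum F (branches T') n)) ∧
    (∀ F : Set (ℕ → ℤ), ∀ T : Set (List ℤ), IsMeagre F → IsUniformlyPerfect T →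
      ∃ T' : Set (List ℤ), T' ⊆ T ∧ IsUniformlyPerfect T' ∧
        ∀ n : ℕ, 1 ≤ n → IsMeagre (iterSum F (branches T') n)) :=
  ⟨Stmt6.part1, Stmt6.part2⟩
end

section
/- There exist a set F ∈ nwd₋ and a Miller tree T ⊆ ℤ^{<ω} such that for every Miller tree T' ⊆ T, the set F + [T'] is not meager. (Concretely, F = {x ∈ ℤ^ω : ∀n, x(n) ≠ 0} works.) -/
open Pointwise Filter

noncomputable def eZ : ℤ ≃ ℤ × ℤ :=
  (Denumerable.eqv ℤ).trans (Denumerable.eqv (ℤ × ℤ)).symm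

noncomputable def fZ : ℤ → ℤ := fun z => (eZ z).1

lemma fiber_infinite (a : ℤ) : {i : ℤ | fZ i = a}.Infinite := by
  apply Set.infinite_of_injective_forall_mem (f := fun j : ℤ => eZ.symm (a, j))
  · intro x y h
    have := congrArg eZ h
    simp only [Equiv.apply_symm_apply] at this
    exact congrArg Prod.snd this
  · intro j
    simp [fZ]

def TT : Set (List ℤ) := {σ | ∀ n, n + 1 < σ.length → σ.getD n 0 = fZ (σ.getD (n+1) 0)}

lemma getD_of_prefix {l₁ l₂ : List ℤ} (h : l₁ <+: l₂) {n : ℕ} (hn : n < l₁.length) :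
    l₂.getD n 0 = l₁.getD n 0 := by
  rw [List.getD_eq_getElem _ _ (lt_of_lt_of_le hn h.length_le),
    List.getD_eq_getElem _ _ hn, h.getElem hn]

lemma getD_concat (σ : List ℤ) (i : ℤ) : (σ ++ [i]).getD σ.length 0 = i := by
  rw [List.getD_eq_getElem _ _ (by simp)]
  exact List.getElem_concat_length (l := σ) (a := i) (i := σ.length) rfl (by simp)

lemma getD_concat2 (σ : List ℤ) (i : ℤ) {m : ℕ} (hm : m = σ.length) :
    (σ ++ [i]).getD m 0 = i := by
  subst hm; exact getD_concat σ i

lemma TT_tree' {σ τ : List ℤ} (hσ : σ ∈ TT) (h : τ <+: σ) : τ ∈ TT := by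
  intro n hn
  rw [← getD_of_prefix h (by omega : n < τ.length), ← getD_of_prefix h hn]
  exact hσ n (lt_of_lt_of_le hn h.length_le)

lemma concat_mem_TT {σ : List ℤ} (hσ : σ ∈ TT) {i : ℤ}
    (hi : ∀ m, σ.length = m + 1 → σ.getD m 0 = fZ i) : σ ++ [i] ∈ TT := by
  intro n hn
  simp only [List.length_append, List.length_cons, List.length_nil] at hn
  rcases Nat.lt_or_ge (n+1) σ.length with h | h
  · rw [getD_of_prefix (l₁ := σ) ⟨[i], rfl⟩ (show n < σ.length by omega),
      getD_of_prefix (l₁ := σ) ⟨[i], rfl⟩ h]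
    exact hσ n h
  · have hn1 : σ.length = n + 1 := by omega
    rw [getD_of_prefix (l₁ := σ) ⟨[i], rfl⟩ (show n < σ.length by omega),
      getD_concat2 σ i (by omega)]
    exact hi n hn1

lemma TT_split (σ : List ℤ) (hσ : σ ∈ TT) :
    {i : ℤ | σ ++ [i] ∈ TT}.Infinite := by
  apply (fiber_infinite (σ.getD (σ.length - 1) 0)).mono
  intro i hi
  refine concat_mem_TT hσ (fun m hm => ?_)
  have : m = σ.length - 1 := by omega
  rw [this, hi.symm]

lemma TT_key {σ : List ℤ} (hσ : σ ∈ TT) :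
    ∀ d q, q + d < σ.length → σ.getD q 0 = fZ^[d] (σ.getD (q + d) 0) := by
  intro d
  induction d with
  | zero => intro q h; simp
  | succ d ih =>
    intro q h
    have h1 : (q + 1) + d < σ.length := by omega
    have e0 : σ.getD q 0 = fZ (σ.getD (q+1) 0) := hσ q (by omega)
    rw [e0, ih (q+1) h1, ← Function.iterate_succ_apply' fZ d]
    congr 2
    omega

lemma TT_sep {σ σ' : List ℤ} (hσ : σ ∈ TT) (hσ' : σ' ∈ TT) {L p : ℕ} (hL : L ≤ p)
    (h1 : p < σ.length) (h2 : p < σ'.length) (hne : σ.getD L 0 ≠ σ'.getD L 0) :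
    σ.getD p 0 ≠ σ'.getD p 0 := by
  intro h
  apply hne
  have e1 := TT_key hσ (p - L) L (by omega)
  have e2 := TT_key hσ' (p - L) L (by omega)
  rw [show L + (p - L) = p by omega] at e1 e2
  rw [e1, e2, h]

lemma miller_TT : IsMiller TT := by
  refine ⟨fun σ hσ τ hτ => TT_tree' hσ hτ, ⟨[], by intro n hn; simp at hn⟩,
    fun σ hσ => ⟨σ, hσ, List.prefix_refl σ, TT_split σ hσ⟩⟩

/-- There are `F ∈ nwd₋` and a Miller tree `T` such that for every
Miller tree `T' ⊆ T` the set `F + [T']` is not meager. -/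
theorem stmt7 : ∃ F : Set (ℕ → ℤ), ∃ T : Set (List ℤ),
    MemNwdMinus F ∧ IsMiller T ∧
    ∀ T' : Set (List ℤ), IsMiller T' → T' ⊆ T → ¬ IsMeagre (F + branches T') := by
  classical
  refine ⟨{x | ∀ n, x n ≠ 0}, TT, ?_, miller_TT, ?_⟩
  · refine ⟨1, fun _ _ => 0, fun _ => id, fun i => ⟨rfl, strictMono_id⟩, ?_⟩
    intro x hx
    refine Set.mem_iUnion.2 ⟨0, fun n => ⟨n, le_refl n, Nat.lt_succ_self n, hx n⟩⟩
  · intro T' hM hsub hmeag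
    obtain ⟨hT'tree, ⟨σ0, hσ0⟩, hT'split⟩ := hM
    obtain ⟨τ0, hτ0T, -, hτ0split⟩ := hT'split σ0 hσ0
    -- the "next splitting node" choice function
    let ext : List ℤ → ℤ → List ℤ := fun τ i =>
      if h : τ ++ [i] ∈ T' then (hT'split _ h).choose else []
    have ext_spec : ∀ τ i, τ ++ [i] ∈ T' →
        ext τ i ∈ T' ∧ (τ ++ [i]) <+: ext τ i ∧ OmegaSplits T' (ext τ i) := by
      intro τ i h
      have := (hT'split _ h).choose_spec
      simp only [ext, dif_pos h]
      exact ⟨this.1, this.2.1, this.2.2⟩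
    -- the dense open sets
    let D : List ℤ → Set (ℕ → ℤ) := fun τ =>
      ⋃ i ∈ {i : ℤ | τ ++ [i] ∈ T'},
        {y | ∀ p ∈ Finset.Ico τ.length (ext τ i).length, y p ≠ (ext τ i).getD p 0}
    let D' : List ℤ → Set (ℕ → ℤ) := fun τ => if OmegaSplits T' τ then D τ else Set.univ
    have hDopen : ∀ τ, IsOpen (D' τ) := by
      intro τ
      simp only [D']
      split
      · apply isOpen_biUnion
        intro i _
        have : {y : ℕ → ℤ | ∀ p ∈ Finset.Ico τ.length (ext τ i).length,
            y p ≠ (ext τ i).getD p 0}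
            = ⋂ p ∈ Finset.Ico τ.length (ext τ i).length,
              (fun y : ℕ → ℤ => y p) ⁻¹' ({(ext τ i).getD p 0}ᶜ) := by
          ext y; simp
        rw [this]
        exact isOpen_biInter_finset fun p _ =>
          (isOpen_compl_singleton).preimage (continuous_apply p)
      · exact isOpen_univ
    have hDdense : ∀ τ, Dense (D' τ) := by
      intro τ
      simp only [D']
      split
      case isTrue hsplit =>
        rw [(PiNat.isTopologicalBasis_cylinders (fun _ : ℕ => ℤ)).dense_iff]
        rintro o ⟨x, n, rfl⟩ -
        -- bad successors
        set L := τ.length with hL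
        set Bad : Set ℤ := {i | τ ++ [i] ∈ T' ∧ ∃ p, L ≤ p ∧ p < n ∧
          p < (ext τ i).length ∧ (ext τ i).getD p 0 = x p} with hBad
        have hsingle : ∀ p, L ≤ p → ({i : ℤ | τ ++ [i] ∈ T' ∧ p < (ext τ i).length ∧
            (ext τ i).getD p 0 = x p} : Set ℤ).Subsingleton := by
          intro p hp i hi i' hi'
          by_contra hne
          have h1 := ext_spec τ i hi.1
          have h2 := ext_spec τ i' hi'.1
          have e1 : (ext τ i).getD L 0 = i := by
            rw [getD_of_prefix h1.2.1 (by simp [hL]), getD_concat2 τ i rfl]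
          have e2 : (ext τ i').getD L 0 = i' := by
            rw [getD_of_prefix h2.2.1 (by simp [hL]), getD_concat2 τ i' rfl]
          exact TT_sep (hsub h1.1) (hsub h2.1) hp hi.2.1 hi'.2.1
            (by rw [e1, e2]; exact hne) (hi.2.2.trans hi'.2.2.symm)
        have hBadfin : Bad.Finite := by
          have hsub2 : Bad ⊆ ⋃ p ∈ Set.Ico L n, {i : ℤ | τ ++ [i] ∈ T' ∧
              p < (ext τ i).length ∧ (ext τ i).getD p 0 = x p} := by
            rintro i ⟨hiT', p, hp1, hp2, hp3, hp4⟩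
            exact Set.mem_biUnion (Set.mem_Ico.mpr ⟨hp1, hp2⟩) ⟨hiT', hp3, hp4⟩
          exact (Set.Finite.biUnion (Set.finite_Ico L n)
            (fun p hp => ((hsingle p (Set.mem_Ico.mp hp).1).finite))).subset hsub2
        have : ({i : ℤ | τ ++ [i] ∈ T'} \ Bad).Infinite := hsplit.diff hBadfin
        obtain ⟨i, hiT', hiBad⟩ := this.nonempty
        refine ⟨fun p => if p < n then x p else (ext τ i).getD p 0 + 1, ?_, ?_⟩
        · intro j hj
          simp [if_pos hj]
        · refine Set.mem_iUnion₂.2 ⟨i, hiT', ?_⟩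
          intro p hp
          rw [Finset.mem_Ico] at hp
          by_cases hpn : p < n
          · simp only [if_pos hpn]
            intro hcon
            exact hiBad ⟨hiT', p, hp.1, hpn, hp.2, hcon.symm⟩
          · simp only [if_neg hpn]
            intro hcon
            omega
      case isFalse => exact dense_univ
    -- residual argument
    have hres : ∀ τ : List ℤ, D' τ ∈ residual (ℕ → ℤ) :=
      fun τ => residual_of_dense_open (hDopen τ) (hDdense τ)
    have hiInter : (⋂ τ : List ℤ, D' τ) ∈ residual (ℕ → ℤ) :=
      (countable_iInter_mem).mpr hres
    have hcompl : ({x : ℕ → ℤ | ∀ n, x n ≠ 0} + branches T')ᶜ ∈ residual (ℕ → ℤ) := hmeag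
    have hRdense := dense_of_mem_residual (Filter.inter_mem hiInter hcompl)
    have hCopen : IsOpen {y : ℕ → ℤ | ∀ p ∈ Finset.range τ0.length, y p ≠ τ0.getD p 0} := by
      have : {y : ℕ → ℤ | ∀ p ∈ Finset.range τ0.length, y p ≠ τ0.getD p 0}
          = ⋂ p ∈ Finset.range τ0.length, (fun y : ℕ → ℤ => y p) ⁻¹' ({τ0.getD p 0}ᶜ) := by
        ext y; simp
      rw [this]
      exact isOpen_biInter_finset fun p _ =>
        (isOpen_compl_singleton).preimage (continuous_apply p)
    have hCne : Set.Nonempty {y : ℕ → ℤ | ∀ p ∈ Finset.range τ0.length, y p ≠ τ0.getD p 0} :=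
      ⟨fun p => τ0.getD p 0 + 1, fun p _ => by
        show τ0.getD p 0 + 1 ≠ τ0.getD p 0
        omega⟩
    obtain ⟨y, hyC, hyD, hyF⟩ := hRdense.inter_open_nonempty _ hCopen hCne
    -- building the dodging branch
    set P : List ℤ → Prop :=
      fun ρ => ρ ∈ T' ∧ OmegaSplits T' ρ ∧ ∀ p < ρ.length, y p ≠ ρ.getD p 0 with hPdef
    have hyD' : ∀ τ : List ℤ, OmegaSplits T' τ → y ∈ D τ := by
      intro τ hτ
      have := Set.mem_iInter.mp hyD τ
      simpa only [D', if_pos hτ] using this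
    have step : ∀ ρ, P ρ → ∃ ρ', P ρ' ∧ ρ <+: ρ' ∧ ρ.length < ρ'.length := by
      intro ρ hρ
      obtain ⟨i, hiT', hdodge⟩ := Set.mem_iUnion₂.mp (hyD' ρ hρ.2.1)
      obtain ⟨hm, hpre, hsp⟩ := ext_spec ρ i hiT'
      have hpre' : ρ <+: ext ρ i := (List.prefix_append ρ [i]).trans hpre
      have hlen : ρ.length < (ext ρ i).length := by
        have := hpre.length_le
        simp only [List.length_append, List.length_cons, List.length_nil] at this
        omega
      refine ⟨ext ρ i, ⟨hm, hsp, ?_⟩, hpre', hlen⟩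
      intro p hp
      by_cases hpρ : p < ρ.length
      · rw [getD_of_prefix hpre' hpρ]
        exact hρ.2.2 p hpρ
      · exact hdodge p (Finset.mem_Ico.mpr ⟨by omega, hp⟩)
    have hP0 : P τ0 := ⟨hτ0T, hτ0split, fun p hp => hyC p (Finset.mem_range.mpr hp)⟩
    let g : ℕ → {ρ : List ℤ // P ρ} := fun n => Nat.rec ⟨τ0, hP0⟩
      (fun _ ih => ⟨(step ih.1 ih.2).choose, (step ih.1 ih.2).choose_spec.1⟩) n
    have gspec : ∀ k, (g k).1 <+: (g (k+1)).1 ∧ (g k).1.length < (g (k+1)).1.length :=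
      fun k => ((step (g k).1 (g k).2).choose_spec).2
    have glen : ∀ k, k ≤ (g k).1.length := by
      intro k
      induction k with
      | zero => exact Nat.zero_le _
      | succ k ih => have := (gspec k).2; omega
    have gmono : ∀ k m, k ≤ m → (g k).1 <+: (g m).1 := by
      intro k m hkm
      induction m with
      | zero =>
        have hk0 : k = 0 := by omega
        subst hk0; exact List.prefix_refl _
      | succ m ih =>
        rcases Nat.lt_or_ge k (m+1) with h | h
        · exact (ih (by omega)).trans (gspec m).1
        · have hk : k = m+1 := by omega
          subst hk; exact List.prefix_refl _
    set b : ℕ → ℤ := fun p => (g (p+1)).1.getD p 0 with hbdef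
    have hbT' : b ∈ branches T' := by
      intro n
      have htake : res b n = (g n).1.take n := by
        apply List.ext_getElem
        · simp only [res, List.length_ofFn, List.length_take]
          have := glen n; omega
        · intro p h1 h2
          simp only [res, List.getElem_ofFn, List.getElem_take]
          have hp1 : p < n := by simpa [res] using h1
          have hplen : p < (g (p+1)).1.length := by have := glen (p+1); omega
          have hpn : p < (g n).1.length := by have := glen n; omega
          have e := getD_of_prefix (gmono (p+1) n (by omega)) hplen
          rw [List.getD_eq_getElem _ _ hplen, List.getD_eq_getElem _ _ hpn] at e
          show b p = (g n).1[p]'hpn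
          show (g (p+1)).1.getD p 0 = (g n).1[p]'hpn
          rw [List.getD_eq_getElem _ _ hplen]
          exact e.symm
      have hpre : res b n <+: (g n).1 := htake ▸ List.take_prefix n (g n).1
      exact hT'tree _ (g n).2.1 _ hpre
    have hbdodge : ∀ p, y p ≠ b p := fun p =>
      (g (p+1)).2.2.2 p (by have := glen (p+1); omega)
    apply hyF
    have hyeq : y = (y - b) + b := by funext p; simp
    rw [hyeq]
    refine Set.add_mem_add (fun n => ?_) hbT'
    simpa using sub_ne_zero_of_ne (hbdodge n)
end

section
/- For every fake null set F ⊆ ℤ^ω there exists a sequence (S_n)_{n∈ω} with S_n ⊆ ℤ^n for each n, such that Σ_{n∈ω} |S_n|/2^n < ∞ and F ⊆ {x ∈ ℤ^ω : x↾n ∈ S_n for infinitely many n}. -/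
open Pointwise Filter

set_option maxHeartbeats 1000000 in
/-- Every fake null `F` is contained in
`{x : x↾n ∈ Sₙ for infinitely many n}` for some `Sₙ ⊆ ℤⁿ` with `Σ |Sₙ|/2ⁿ < ∞`. -/
theorem stmt9 (F : Set (ℕ → ℤ)) (hF : IsFakeNull F) :
    ∃ S : ℕ → Finset (List ℤ),
      (∀ n : ℕ, ∀ σ ∈ S n, σ.length = n) ∧
      Summable (fun n => ((S n).card : ℝ) / 2 ^ n) ∧
      F ⊆ {x | ∃ᶠ n in Filter.atTop, res x n ∈ S n} := by
  choose σ hsum hlt hcov using fun k : ℕ => hF ((1:ℝ)/2^k) (by positivity)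
  set f : ℕ × ℕ → List ℤ := fun p => σ p.1 p.2 with hf
  set w : ℕ × ℕ → ℝ := fun p => 1 / 2 ^ (f p).length with hwdef
  have hwpos : ∀ p, 0 < w p := fun p => by positivity
  have hw : Summable w := by
    rw [summable_prod_of_nonneg (fun p => (hwpos p).le)]
    refine ⟨fun k => hsum k, ?_⟩
    refine Summable.of_nonneg_of_le (fun k => tsum_nonneg fun m => (hwpos (k, m)).le)
      (fun k => (hlt k).le) ?_
    simpa [one_div, ← inv_pow] using summable_geometric_two
  set g : ℕ × ℕ → ℕ := fun p => (f p).length with hg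
  have hfin : ∀ n, (g ⁻¹' {n}).Finite := by
    intro n
    have h1 : ∀ᶠ p in Filter.cofinite, w p < 1 / 2 ^ n :=
      hw.tendsto_cofinite_zero.eventually_lt_const (by positivity)
    refine ((Filter.eventually_cofinite.mp h1).subset ?_)
    intro p hp
    simp only [Set.mem_preimage, Set.mem_singleton_iff] at hp
    simp [Set.mem_setOf_eq, hwdef, hg ▸ hp]
  refine ⟨fun n => ((hfin n).image f).toFinset, ?_, ?_, ?_⟩
  · intro n τ hτ
    simp only [Set.Finite.mem_toFinset, Set.mem_image] at hτ
    obtain ⟨p, hp, rfl⟩ := hτ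
    exact hp
  · -- summability
    have hsig : Summable (fun x : Σ n : ℕ, ↥(g ⁻¹' {n}) => w x.2) :=
      ((Equiv.sigmaFiberEquiv g).summable_iff.mpr hw)
    have h2 := (summable_sigma_of_nonneg (f := fun x : Σ n : ℕ, ↥(g ⁻¹' {n}) => w x.2)
      (fun x => (hwpos _).le)).mp hsig
    refine Summable.of_nonneg_of_le (fun n => by positivity) (fun n => ?_) h2.2
    haveI : ∀ n, Fintype ↥(g ⁻¹' {n}) := fun n => (hfin n).fintype
    have e1 : ∑' p : ↥(g ⁻¹' {n}), w ↑p = (Fintype.card ↥(g ⁻¹' {n}) : ℝ) * (1/2^n) := by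
      rw [tsum_fintype]
      rw [Finset.sum_congr rfl (fun p _ => ?_), Finset.sum_const, nsmul_eq_mul,
        Finset.card_univ]
      have hp : (f ↑p).length = n := p.2
      show (1:ℝ)/2^(f ↑p).length = 1/2^n
      rw [hp]
    rw [e1]
    have hcard : (((hfin n).image f).toFinset.card : ℝ) ≤ (Fintype.card ↥(g ⁻¹' {n}) : ℝ) := by
      have : ((hfin n).image f).toFinset.card = (f '' (g ⁻¹' {n})).ncard :=
        (Set.ncard_eq_toFinset_card _ _).symm
      rw [this]
      have h3 : (f '' (g ⁻¹' {n})).ncard ≤ (g ⁻¹' {n}).ncard := Set.ncard_image_le (hfin n)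
      have h4 : (g ⁻¹' {n}).ncard = Fintype.card ↥(g ⁻¹' {n}) := by
        rw [← Nat.card_coe_set_eq, Nat.card_eq_fintype_card]
      exact_mod_cast h4 ▸ h3
    rw [div_eq_mul_one_div]
    gcongr
  · intro x hx
    rw [Set.mem_setOf_eq, Filter.frequently_atTop]
    intro N
    obtain ⟨m, hm⟩ := Set.mem_iUnion.mp (hcov N hx)
    refine ⟨(σ N m).length, ?_, ?_⟩
    · by_contra h
      push_neg at h
      have h1 : (1:ℝ)/2^(σ N m).length ≤ ∑' m', (1:ℝ)/2^(σ N m').length :=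
        Summable.le_tsum (hsum N) m (fun _ _ => by positivity)
      have h2 : (1:ℝ)/2^N ≤ 1/2^(σ N m).length := by
        apply one_div_le_one_div_of_le (by positivity)
        exact pow_le_pow_right₀ (by norm_num) h.le
      linarith [hlt N]
    · simp only [Set.Finite.mem_toFinset, Set.mem_image]
      exact ⟨(N, m), rfl, hm.symm⟩
end

section
/- Every Miller tree T ⊆ ℤ^{<ω} contains a Miller tree T' ⊆ T such that [T'] is fake null. -/
open Pointwise Filter

private lemma res_length (x : ℕ → ℤ) (n : ℕ) : (res x n).length = n := by simp [res]

private lemma res_succ (x : ℕ → ℤ) (n : ℕ) : res x (n + 1) = res x n ++ [x n] := by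
  rw [res, List.ofFn_succ', List.concat_eq_append]
  simp [res]

private lemma res_prefix (x : ℕ → ℤ) {m n : ℕ} (h : m ≤ n) : res x m <+: res x n := by
  induction n with
  | zero =>
    have : m = 0 := Nat.le_zero.mp h
    subst this; exact List.prefix_rfl
  | succ n ih =>
    by_cases hm : m = n + 1
    · subst hm; exact List.prefix_rfl
    · have h1 : m ≤ n := by omega
      refine (ih h1).trans ?_
      rw [res_succ]
      exact List.prefix_append _ _

private lemma pref_eq {a b w : List ℤ} (h1 : a <+: w) (h2 : b <+: w)
    (hl : a.length = b.length) : a = b :=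
  (List.prefix_of_prefix_length_le h1 h2 hl.le).eq_of_length hl

private lemma cons_suffix_of_ne {s t : List ℕ} (h : s <:+ t) (hne : s ≠ t) :
    ∃ k, (k :: s) <:+ t := by
  obtain ⟨u, hu⟩ := h
  rcases List.eq_nil_or_concat u with rfl | ⟨u', m, rfl⟩
  · simp at hu; exact absurd hu hne
  · exact ⟨m, u', by rw [← hu]; simp [List.concat_eq_append]⟩

/-- Auxiliary recursion building the skeleton of the thin Miller subtree. -/
def buildF (root : List ℤ) (c : List ℤ → ℕ → ℤ) (nxt : List ℤ → ℕ → List ℤ) :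
    List ℕ → List ℤ
  | [] => root
  | k :: s =>
      nxt (buildF root c nxt s ++ [c (buildF root c nxt s) k])
        (Encodable.encode (k :: s) + (k :: s).length)

/-- Every Miller tree contains a Miller tree whose body is fake null. -/
theorem stmt12 (T : Set (List ℤ)) (hT : IsMiller T) :
    ∃ T' : Set (List ℤ), T' ⊆ T ∧ IsMiller T' ∧ IsFakeNull (branches T') := by
  classical
  obtain ⟨hTree, ⟨σ₀, hσ₀⟩, hSplit⟩ := hT
  -- every node has ω-splitting extensions of arbitrary length
  have ext1 : ∀ m : ℕ, ∀ σ ∈ T, ∃ τ ∈ T, σ <+: τ ∧ OmegaSplits T τ ∧ m ≤ τ.length := by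
    intro m
    induction m with
    | zero =>
      intro σ hσ
      obtain ⟨τ, hτ, h1, h2⟩ := hSplit σ hσ
      exact ⟨τ, hτ, h1, h2, Nat.zero_le _⟩
    | succ m ih =>
      intro σ hσ
      obtain ⟨τ, hτ, h1, h2, h3⟩ := ih σ hσ
      obtain ⟨i, hi⟩ := h2.nonempty
      obtain ⟨τ', hτ', h1', h2'⟩ := hSplit (τ ++ [i]) hi
      have h4 := h1'.length_le
      rw [List.length_append, List.length_singleton] at h4
      exact ⟨τ', hτ', h1.trans ((List.prefix_append τ [i]).trans h1'), h2', by omega⟩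
  have hnxt0 : ∀ (σ : List ℤ) (m : ℕ), ∃ τ,
      σ ∈ T → (τ ∈ T ∧ σ <+: τ ∧ OmegaSplits T τ ∧ m ≤ τ.length) := by
    intro σ m
    by_cases h : σ ∈ T
    · obtain ⟨τ, hτ, h1, h2, h3⟩ := ext1 m σ h
      exact ⟨τ, fun _ => ⟨hτ, h1, h2, h3⟩⟩
    · exact ⟨[], fun h' => absurd h' h⟩
  choose nxt hnxt using hnxt0
  have hc0 : ∀ σ : List ℤ, ∃ c : ℕ → ℤ,
      OmegaSplits T σ → (Function.Injective c ∧ ∀ k, σ ++ [c k] ∈ T) := by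
    intro σ
    by_cases h : OmegaSplits T σ
    · refine ⟨fun k => ((h.natEmbedding) k : ℤ), fun _ => ⟨?_, fun k => ((h.natEmbedding) k).2⟩⟩
      exact fun a b hab => (h.natEmbedding).injective (Subtype.val_injective hab)
    · exact ⟨fun _ => 0, fun h' => absurd h' h⟩
  choose c hc using hc0
  set F : List ℕ → List ℤ :=
    buildF (nxt σ₀ (Encodable.encode ([] : List ℕ))) c nxt with hFdef
  have hFnil : F [] = nxt σ₀ (Encodable.encode ([] : List ℕ)) := by rw [hFdef]; rfl
  have hFconsEq : ∀ (k : ℕ) (s : List ℕ),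
      F (k :: s) = nxt (F s ++ [c (F s) k]) (Encodable.encode (k :: s) + (k :: s).length) := by
    intro k s; rw [hFdef]; rfl
  -- basic invariant
  have hF : ∀ s : List ℕ, (F s ∈ T ∧ OmegaSplits T (F s)) ∧
      Encodable.encode s + s.length ≤ (F s).length := by
    intro s
    induction s with
    | nil =>
      have h := hnxt σ₀ (Encodable.encode ([] : List ℕ)) hσ₀
      rw [hFnil]
      exact ⟨⟨h.1, h.2.2.1⟩, by simp only [List.length_nil, Nat.add_zero]; exact h.2.2.2⟩
    | cons k s ih =>
      have hmem : F s ++ [c (F s) k] ∈ T := (hc (F s) ih.1.2).2 k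
      have h2 := hnxt (F s ++ [c (F s) k]) (Encodable.encode (k :: s) + (k :: s).length) hmem
      rw [hFconsEq]
      exact ⟨⟨h2.1, h2.2.2.1⟩, h2.2.2.2⟩
  have hFcons : ∀ (k : ℕ) (s : List ℕ), F s ++ [c (F s) k] <+: F (k :: s) := by
    intro k s
    rw [hFconsEq]
    exact (hnxt _ _ ((hc (F s) (hF s).1.2).2 k)).2.1
  -- monotonicity: suffixes map to prefixes
  have hA : ∀ (t s : List ℕ), s <:+ t → F s <+: F t := by
    intro t
    induction t with
    | nil =>
      intro s hs
      rw [List.suffix_nil.mp hs]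
    | cons k t ih =>
      intro s hs
      rcases List.suffix_cons_iff.mp hs with rfl | hs'
      · exact List.prefix_rfl
      · exact (ih s hs').trans ((List.prefix_append _ _).trans (hFcons k t))
  -- key rigidity lemma
  have hQ : ∀ n : ℕ, ∀ s t : List ℕ, s.length + t.length ≤ n → F s <+: F t → s <:+ t := by
    intro n
    induction n with
    | zero =>
      intro s t hlen _
      have hs : s = [] := List.length_eq_zero_iff.mp (by omega)
      subst hs; exact List.nil_suffix
    | succ n ih =>
      intro s t hlen h
      match s, t, hlen, h with
      | [], t, _, _ => exact List.nil_suffix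
      | j :: s', [], hlen, h =>
        exfalso
        have l1 : (F s' ++ [c (F s') j]).length ≤ (F (j :: s')).length := (hFcons j s').length_le
        have l2 : (F []).length ≤ (F s').length := (hA s' [] List.nil_suffix).length_le
        have l3 := h.length_le
        rw [List.length_append, List.length_singleton] at l1
        omega
      | j :: s', k :: t', hlen, h =>
        have hlen1 : (j :: s').length + t'.length ≤ n := by
          simp only [List.length_cons] at hlen ⊢; omega
        have hlen2 : s'.length + (k :: t').length ≤ n := by
          simp only [List.length_cons] at hlen ⊢; omega
        by_cases hcase : (F (j :: s')).length ≤ (F t').length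
        · have h1 : F (j :: s') <+: F t' :=
            List.prefix_of_prefix_length_le h ((List.prefix_append _ _).trans (hFcons k t')) hcase
          exact (ih _ _ hlen1 h1).trans (List.suffix_cons k t')
        · have hs'pre : F s' <+: F (k :: t') :=
            ((List.prefix_append _ _).trans (hFcons j s')).trans h
          have hsuf : s' <:+ k :: t' := ih _ _ hlen2 hs'pre
          rcases List.suffix_cons_iff.mp hsuf with heq | hsuf'
          · exfalso
            have l1 : (F s' ++ [c (F s') j]).length ≤ (F (j :: s')).length :=
              (hFcons j s').length_le
            have l2 := h.length_le
            rw [List.length_append, List.length_singleton] at l1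
            rw [heq] at l1 l2
            omega
          · rcases eq_or_ne s' t' with rfl | hne
            · have p1 : F s' ++ [c (F s') j] <+: F (k :: s') := (hFcons j s').trans h
              have p2 : F s' ++ [c (F s') k] <+: F (k :: s') := hFcons k s'
              have heq2 : F s' ++ [c (F s') j] = F s' ++ [c (F s') k] :=
                pref_eq p1 p2 (by simp)
              have hjk : j = k := (hc (F s') (hF s').1.2).1 (by simpa using heq2)
              rw [hjk]
            · obtain ⟨m, hm⟩ := cons_suffix_of_ne hsuf' hne
              have p1 : F s' ++ [c (F s') j] <+: F (k :: t') := (hFcons j s').trans h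
              have p2 : F s' ++ [c (F s') m] <+: F (k :: t') :=
                ((hFcons m s').trans (hA t' _ hm)).trans
                  ((List.prefix_append _ _).trans (hFcons k t'))
              have heq2 : F s' ++ [c (F s') j] = F s' ++ [c (F s') m] :=
                pref_eq p1 p2 (by simp)
              have hjm : j = m := (hc (F s') (hF s').1.2).1 (by simpa using heq2)
              rw [hjm]
              exact hm.trans (List.suffix_cons k t')
  set T' : Set (List ℤ) := {τ : List ℤ | ∃ s : List ℕ, τ <+: F s} with hT'def
  -- branches pass through every generation of the skeleton
  have hstep : ∀ x, x ∈ branches T' → ∀ s : List ℕ, res x (F s).length = F s →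
      ∃ k : ℕ, res x (F (k :: s)).length = F (k :: s) := by
    intro x hx s hgood
    obtain ⟨t, ht⟩ : ∃ t, res x ((F s).length + 1) <+: F t := hx ((F s).length + 1)
    have hp0 : F s <+: res x ((F s).length + 1) := by
      conv_lhs => rw [← hgood]
      exact res_prefix x (Nat.le_succ _)
    have hltlen : (F s).length + 1 ≤ (F t).length := by
      have h := ht.length_le; rw [res_length] at h; exact h
    have hsuf : s <:+ t := hQ _ s t le_rfl (hp0.trans ht)
    have hne : s ≠ t := by rintro rfl; omega
    obtain ⟨k, hk⟩ := cons_suffix_of_ne hsuf hne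
    have hx1 : res x ((F s).length + 1) = F s ++ [x (F s).length] := by
      rw [res_succ, hgood]
    have p1 : F s ++ [x (F s).length] <+: F t := hx1 ▸ ht
    have p2 : F s ++ [c (F s) k] <+: F t := (hFcons k s).trans (hA t _ hk)
    have hxL : x (F s).length = c (F s) k := by
      have := pref_eq p1 p2 (by simp)
      simpa using this
    have hM : (F s).length + 1 ≤ (F (k :: s)).length := by
      have h := (hFcons k s).length_le
      rw [List.length_append, List.length_singleton] at h
      omega
    obtain ⟨t₂, ht₂⟩ : ∃ t₂, res x (F (k :: s)).length <+: F t₂ := hx _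
    have hlt2 : (F (k :: s)).length ≤ (F t₂).length := by
      have h := ht₂.length_le; rw [res_length] at h; exact h
    have hp0' : F s <+: res x (F (k :: s)).length := by
      conv_lhs => rw [← hgood]
      exact res_prefix x (by omega)
    have hsuf₂ : s <:+ t₂ := hQ _ s t₂ le_rfl (hp0'.trans ht₂)
    have hne₂ : s ≠ t₂ := by rintro rfl; omega
    obtain ⟨k₂, hk₂⟩ := cons_suffix_of_ne hsuf₂ hne₂
    have q1 : F s ++ [x (F s).length] <+: F t₂ := by
      rw [← hx1]
      exact (res_prefix x (show (F s).length + 1 ≤ (F (k :: s)).length by omega)).trans ht₂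
    have q2 : F s ++ [c (F s) k₂] <+: F t₂ := (hFcons k₂ s).trans (hA t₂ _ hk₂)
    have hxL2 : x (F s).length = c (F s) k₂ := by
      have := pref_eq q1 q2 (by simp)
      simpa using this
    have hkk : k₂ = k := (hc (F s) (hF s).1.2).1 (by rw [← hxL2, hxL])
    subst hkk
    exact ⟨k₂, pref_eq ht₂ (hA t₂ _ hk₂) (by rw [res_length])⟩
  have hbase : ∀ x, x ∈ branches T' → res x (F []).length = F [] := by
    intro x hx
    obtain ⟨t, ht⟩ : ∃ t, res x (F []).length <+: F t := hx _
    exact pref_eq ht (hA t [] List.nil_suffix) (by rw [res_length])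
  have hcover : ∀ x, x ∈ branches T' → ∀ g : ℕ,
      ∃ s : List ℕ, s.length = g ∧ res x (F s).length = F s := by
    intro x hx g
    induction g with
    | zero => exact ⟨[], rfl, hbase x hx⟩
    | succ g ih =>
      obtain ⟨s, h1, h2⟩ := ih
      obtain ⟨k, hk⟩ := hstep x hx s h2
      exact ⟨k :: s, by simp [h1], hk⟩
  refine ⟨T', ?_, ⟨?_, ⟨F [], [], List.prefix_rfl⟩, ?_⟩, ?_⟩
  · rintro τ ⟨s, hs⟩
    exact hTree (F s) (hF s).1.1 τ hs
  · rintro σ ⟨s, hs⟩ τ hτ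
    exact ⟨s, hτ.trans hs⟩
  · rintro σ ⟨s, hs⟩
    refine ⟨F s, ⟨s, List.prefix_rfl⟩, hs, ?_⟩
    have hsub : Set.range (c (F s)) ⊆ {i : ℤ | F s ++ [i] ∈ T'} := by
      rintro i ⟨k, rfl⟩
      exact ⟨k :: s, hFcons k s⟩
    exact (Set.infinite_range_of_injective (hc (F s) (hF s).1.2).1).mono hsub
  · intro ε hε
    obtain ⟨g, hg⟩ := exists_pow_lt_of_lt_one (show (0:ℝ) < ε / 2 by linarith)
      (show (1:ℝ)/2 < 1 by norm_num)
    set σc : ℕ → List ℤ := fun n =>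
      if (Denumerable.ofNat (List ℕ) n).length = g then F (Denumerable.ofNat (List ℕ) n)
      else List.replicate (n + g) 0 with hσc
    have hlenb : ∀ n : ℕ, n + g ≤ (σc n).length := by
      intro n
      rw [hσc]
      by_cases h : (Denumerable.ofNat (List ℕ) n).length = g
      · simp only [if_pos h]
        have h2 := (hF (Denumerable.ofNat (List ℕ) n)).2
        rw [Denumerable.encode_ofNat] at h2
        omega
      · simp only [if_neg h, List.length_replicate]
        omega
    have hle : ∀ n : ℕ, (1:ℝ) / 2 ^ (σc n).length ≤ (1/2)^g * (1/2)^n := by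
      intro n
      calc (1:ℝ) / 2 ^ (σc n).length = (1/2)^(σc n).length := by rw [one_div_pow]
        _ ≤ (1/2)^(g + n) :=
            pow_le_pow_of_le_one (by norm_num) (by norm_num) (by have := hlenb n; omega)
        _ = (1/2)^g * (1/2)^n := pow_add _ _ _
    have hsummaj : Summable (fun n : ℕ => ((1:ℝ)/2)^g * (1/2)^n) :=
      summable_geometric_two.mul_left _
    have hpos : ∀ n : ℕ, 0 ≤ (1:ℝ) / 2 ^ (σc n).length := fun n => by positivity
    have hsum : Summable (fun n => (1:ℝ) / 2 ^ (σc n).length) :=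
      Summable.of_nonneg_of_le hpos hle hsummaj
    refine ⟨σc, hsum, ?_, ?_⟩
    · have hts := Summable.tsum_le_tsum hle hsum hsummaj
      rw [tsum_mul_left, tsum_geometric_two] at hts
      have hpow : (0:ℝ) ≤ (1/2)^g := by positivity
      nlinarith
    · intro x hx
      obtain ⟨s, hslen, hsgood⟩ := hcover x hx g
      refine Set.mem_iUnion.mpr ⟨Encodable.encode s, ?_⟩
      show res x (σc (Encodable.encode s)).length = σc (Encodable.encode s)
      rw [hσc]
      simp only [Denumerable.ofNat_encode, if_pos hslen]
      exact hsgood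
end

section
/- For any Miller trees T₁, T₂ ⊆ ℤ^{<ω}, the algebraic sum [T₁] + [T₂] is not fake null. -/
open Pointwise Filter

section Stmt13Aux

variable {T A : Set (List ℤ)} {σ : ℕ → List ℤ}

lemma stmt13_nil_mem (hT : IsTree T) (hne : T.Nonempty) : ([] : List ℤ) ∈ T := by
  obtain ⟨s, hs⟩ := hne
  exact hT s hs [] (List.nil_prefix)

lemma stmt13_ext_one (h : IsMiller T) {s : List ℤ} (hs : s ∈ T) :
    ∃ t ∈ T, s <+: t ∧ t.length = s.length + 1 := by
  obtain ⟨τ, hτ, hpre, hsp⟩ := h.2.2 s hs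
  obtain ⟨i, hi⟩ := hsp.nonempty
  have hiT : τ ++ [i] ∈ T := hi
  have hlen : s.length + 1 ≤ (τ ++ [i]).length := by
    have := hpre.length_le; simp only [List.length_append, List.length_singleton]; omega
  refine ⟨(τ ++ [i]).take (s.length + 1), h.1 _ hiT _ (List.take_prefix _ _), ?_, ?_⟩
  · rw [List.prefix_take_iff]
    exact ⟨hpre.trans (List.prefix_append _ _), Nat.le_succ _⟩
  · rw [List.length_take]; omega

lemma stmt13_ext_len (h : IsMiller T) {s : List ℤ} (hs : s ∈ T) (k : ℕ) :
    ∃ t ∈ T, s <+: t ∧ t.length = s.length + k := by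
  induction k with
  | zero => exact ⟨s, hs, List.prefix_refl _, rfl⟩
  | succ k ih =>
    obtain ⟨t, ht, hpre, hlen⟩ := ih
    obtain ⟨t', ht', hpre', hlen'⟩ := stmt13_ext_one h ht
    exact ⟨t', ht', hpre.trans hpre', by omega⟩

lemma stmt13_finite_small (hs : Summable (fun n => (1 : ℝ) / 2 ^ (σ n).length)) (m : ℕ) :
    {n | (σ n).length ≤ m}.Finite := by
  have hev : ∀ᶠ n in atTop, (1 : ℝ) / 2 ^ (σ n).length < 1 / 2 ^ m :=
    hs.tendsto_atTop_zero.eventually_lt_const (by positivity)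
  obtain ⟨N, hN⟩ := eventually_atTop.1 hev
  apply (Set.finite_Iio N).subset
  intro n hn
  by_contra hge
  simp only [Set.mem_Iio, not_lt] at hge
  have h1 := hN n hge
  have h2 : (1 : ℝ) / 2 ^ m ≤ 1 / 2 ^ (σ n).length := by
    apply one_div_le_one_div_of_le (by positivity)
    exact pow_le_pow_right₀ (by norm_num) hn
  linarith

/-- The key invariant: no `σ n` is an initial segment of the coordinatewise sum. -/
def stmt13Inv (σ : ℕ → List ℤ) (u w : List ℤ) : Prop :=
  ∀ n, ¬ σ n <+: List.zipWith (· + ·) u w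

lemma stmt13_step (hT : IsMiller T) (hA : IsMiller A)
    (hσ : ∀ m, {n | (σ n).length ≤ m}.Finite)
    {u w : List ℤ} (hu : u ∈ T) (hw : w ∈ A) (hlen : u.length = w.length)
    (husp : OmegaSplits T u) (hinv : stmt13Inv σ u w) :
    ∃ u' w', u' ∈ T ∧ w' ∈ A ∧ u'.length = w'.length ∧ u.length < u'.length ∧
      u <+: u' ∧ w <+: w' ∧ OmegaSplits A w' ∧ stmt13Inv σ u' w' := by
  obtain ⟨t, ht, htpre, htlen⟩ := stmt13_ext_one hA hw
  obtain ⟨η, hη, hηpre, hηsp⟩ := hA.2.2 t ht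
  set ℓ := u.length with hℓ
  set m := η.length with hm
  have hmℓ : ℓ + 1 ≤ m := by
    have := hηpre.length_le; omega
  set Bad : Set ℤ := (fun n => (σ n).getD ℓ 0 - η.getD ℓ 0) '' {n | (σ n).length ≤ m} with hBad
  have hbadfin : Bad.Finite := (hσ m).image _
  obtain ⟨i, hiT, hibad⟩ : ∃ i, u ++ [i] ∈ T ∧ i ∉ Bad := by
    obtain ⟨i, hi⟩ := (husp.diff hbadfin).nonempty
    exact ⟨i, hi.1, hi.2⟩
  obtain ⟨ξ, hξ, hξpre, hξlen⟩ := stmt13_ext_len hT hiT (m - (ℓ + 1))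
  have hξlen' : ξ.length = m := by
    simp only [List.length_append, List.length_singleton] at hξlen; omega
  have hupre : u <+: ξ := (List.prefix_append u [i]).trans hξpre
  have hwpre : w <+: η := htpre.trans hηpre
  refine ⟨ξ, η, hξ, hη, by omega, by omega, hupre, hwpre, hηsp, ?_⟩
  intro n hn
  set Z := List.zipWith (· + ·) ξ η with hZ
  have hZlen : Z.length = m := by
    rw [hZ, List.length_zipWith]; omega
  have hσn_le : (σ n).length ≤ m := by
    have := hn.length_le; omega
  rcases le_or_gt (σ n).length ℓ with hcase | hcase
  · -- σ n would already be a prefix of the old sum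
    apply hinv n
    have h1 : σ n <+: Z.take ℓ := List.prefix_take_iff.2 ⟨hn, hcase⟩
    have h2 : Z.take ℓ = List.zipWith (· + ·) u w := by
      rw [hZ, List.take_zipWith]
      congr 1
      · exact (List.prefix_iff_eq_take.1 hupre).symm
      · rw [hlen]; exact (List.prefix_iff_eq_take.1 hwpre).symm
    rwa [h2] at h1
  · -- position ℓ was dodged
    apply hibad
    refine ⟨n, hσn_le, ?_⟩
    show (σ n).getD ℓ 0 - η.getD ℓ 0 = i
    have hℓZ : ℓ < Z.length := by omega
    have hℓξ : ℓ < ξ.length := by omega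
    have hℓη : ℓ < η.length := by omega
    have hval : (σ n)[ℓ]'hcase = Z[ℓ]'hℓZ := hn.getElem hcase
    have hZℓ : Z[ℓ]'hℓZ = ξ[ℓ]'hℓξ + η[ℓ]'hℓη := by
      simp only [hZ]; exact List.getElem_zipWith
    have hξℓ : ξ[ℓ]'hℓξ = i := by
      have h1 : ℓ < (u ++ [i]).length := by simp; omega
      have := hξpre.getElem (i := ℓ) h1
      rw [← this]
      exact List.getElem_concat_length (l := u) (a := i) (i := ℓ) rfl h1
    rw [List.getD_eq_getElem _ _ hcase, List.getD_eq_getElem _ _ hℓη, hval, hZℓ, hξℓ]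
    ring

/-- A state of the fusion construction. -/
structure Stmt13St (T A : Set (List ℤ)) (σ : ℕ → List ℤ) where
  u : List ℤ
  w : List ℤ
  hu : u ∈ T
  hw : w ∈ A
  hlen : u.length = w.length
  hsp : OmegaSplits T u
  hinv : stmt13Inv σ u w

lemma stmt13_dstep (hT : IsMiller T) (hA : IsMiller A)
    (hσ : ∀ m, {n | (σ n).length ≤ m}.Finite) (s : Stmt13St T A σ) :
    ∃ s' : Stmt13St T A σ, s.u <+: s'.u ∧ s.w <+: s'.w ∧ s.u.length + 1 ≤ s'.u.length := by
  obtain ⟨u₁, w₁, hu₁, hw₁, hlen₁, hlt₁, hup₁, hwp₁, hsp₁, hinv₁⟩ :=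
    stmt13_step hT hA hσ s.hu s.hw s.hlen s.hsp s.hinv
  have hinv₁' : stmt13Inv σ w₁ u₁ := by
    intro n hn
    apply hinv₁ n
    rwa [List.zipWith_comm_of_comm (fun a b => add_comm a b)] at hn
  obtain ⟨w₂, u₂, hw₂, hu₂, hlen₂, hlt₂, hwp₂, hup₂, hsp₂, hinv₂⟩ :=
    stmt13_step hA hT hσ hw₁ hu₁ hlen₁.symm hsp₁ hinv₁'
  have hinv₂' : stmt13Inv σ u₂ w₂ := by
    intro n hn
    apply hinv₂ n
    rwa [List.zipWith_comm_of_comm (fun a b => add_comm a b)] at hn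
  exact ⟨⟨u₂, w₂, hu₂, hw₂, hlen₂.symm, hsp₂, hinv₂'⟩,
    hup₁.trans hup₂, hwp₁.trans hwp₂, by
      have := hup₂.length_le; simp only at *; omega⟩

variable (hT : IsMiller T) (hA : IsMiller A)
  (hσ : ∀ m, {n | (σ n).length ≤ m}.Finite)

noncomputable def stmt13Chain (s0 : Stmt13St T A σ) : ℕ → Stmt13St T A σ
  | 0 => s0
  | n + 1 => (stmt13_dstep hT hA hσ (stmt13Chain s0 n)).choose

lemma stmt13Chain_succ (s0 : Stmt13St T A σ) (n : ℕ) :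
    (stmt13Chain hT hA hσ s0 n).u <+: (stmt13Chain hT hA hσ s0 (n + 1)).u ∧
    (stmt13Chain hT hA hσ s0 n).w <+: (stmt13Chain hT hA hσ s0 (n + 1)).w ∧
    (stmt13Chain hT hA hσ s0 n).u.length + 1 ≤ (stmt13Chain hT hA hσ s0 (n + 1)).u.length :=
  (stmt13_dstep hT hA hσ (stmt13Chain hT hA hσ s0 n)).choose_spec

lemma stmt13Chain_mono (s0 : Stmt13St T A σ) {a b : ℕ} (hab : a ≤ b) :
    (stmt13Chain hT hA hσ s0 a).u <+: (stmt13Chain hT hA hσ s0 b).u ∧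
    (stmt13Chain hT hA hσ s0 a).w <+: (stmt13Chain hT hA hσ s0 b).w := by
  induction b, hab using Nat.le_induction with
  | base => exact ⟨List.prefix_refl _, List.prefix_refl _⟩
  | succ b hab ih =>
    obtain ⟨h1, h2, _⟩ := stmt13Chain_succ hT hA hσ s0 b
    exact ⟨ih.1.trans h1, ih.2.trans h2⟩

lemma stmt13Chain_len (s0 : Stmt13St T A σ) (n : ℕ) :
    n ≤ (stmt13Chain hT hA hσ s0 n).u.length := by
  induction n with
  | zero => omega
  | succ n ih =>
    have := (stmt13Chain_succ hT hA hσ s0 n).2.2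
    omega

noncomputable def stmt13x (s0 : Stmt13St T A σ) : ℕ → ℤ :=
  fun k => ((stmt13Chain hT hA hσ s0 (k + 1)).u).getD k 0

noncomputable def stmt13y (s0 : Stmt13St T A σ) : ℕ → ℤ :=
  fun k => ((stmt13Chain hT hA hσ s0 (k + 1)).w).getD k 0

lemma stmt13_getElem_u (s0 : Stmt13St T A σ) {a b j : ℕ}
    (h1 : j < (stmt13Chain hT hA hσ s0 a).u.length)
    (h2 : j < (stmt13Chain hT hA hσ s0 b).u.length) :
    (stmt13Chain hT hA hσ s0 a).u[j]'h1 = (stmt13Chain hT hA hσ s0 b).u[j]'h2 := by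
  rcases le_total a b with hab | hab
  · exact (stmt13Chain_mono hT hA hσ s0 hab).1.getElem h1
  · exact ((stmt13Chain_mono hT hA hσ s0 hab).1.getElem h2).symm

lemma stmt13_getElem_w (s0 : Stmt13St T A σ) {a b j : ℕ}
    (h1 : j < (stmt13Chain hT hA hσ s0 a).w.length)
    (h2 : j < (stmt13Chain hT hA hσ s0 b).w.length) :
    (stmt13Chain hT hA hσ s0 a).w[j]'h1 = (stmt13Chain hT hA hσ s0 b).w[j]'h2 := by
  rcases le_total a b with hab | hab
  · exact (stmt13Chain_mono hT hA hσ s0 hab).2.getElem h1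
  · exact ((stmt13Chain_mono hT hA hσ s0 hab).2.getElem h2).symm

lemma stmt13_res_x (s0 : Stmt13St T A σ) (n k : ℕ)
    (hk : k ≤ (stmt13Chain hT hA hσ s0 n).u.length) :
    res (stmt13x hT hA hσ s0) k = ((stmt13Chain hT hA hσ s0 n).u).take k := by
  apply List.ext_getElem
  · simp only [res, List.length_ofFn, List.length_take]; omega
  · intro j hj1 hj2
    simp only [res]
    rw [List.getElem_ofFn, List.getElem_take]
    simp only [res, List.length_ofFn] at hj1
    have hj3 : j < (stmt13Chain hT hA hσ s0 (j + 1)).u.length := by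
      have := stmt13Chain_len hT hA hσ s0 (j + 1); omega
    have hj4 : j < (stmt13Chain hT hA hσ s0 n).u.length := by omega
    show stmt13x hT hA hσ s0 j = _
    rw [stmt13x, List.getD_eq_getElem _ _ hj3]
    exact stmt13_getElem_u hT hA hσ s0 hj3 hj4

lemma stmt13_res_y (s0 : Stmt13St T A σ) (n k : ℕ)
    (hk : k ≤ (stmt13Chain hT hA hσ s0 n).w.length) :
    res (stmt13y hT hA hσ s0) k = ((stmt13Chain hT hA hσ s0 n).w).take k := by
  apply List.ext_getElem
  · simp only [res, List.length_ofFn, List.length_take]; omega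
  · intro j hj1 hj2
    simp only [res]
    rw [List.getElem_ofFn, List.getElem_take]
    simp only [res, List.length_ofFn] at hj1
    have hj3 : j < (stmt13Chain hT hA hσ s0 (j + 1)).w.length := by
      have h1 := stmt13Chain_len hT hA hσ s0 (j + 1)
      have h2 := (stmt13Chain hT hA hσ s0 (j + 1)).hlen
      omega
    have hj4 : j < (stmt13Chain hT hA hσ s0 n).w.length := by omega
    show stmt13y hT hA hσ s0 j = _
    rw [stmt13y, List.getD_eq_getElem _ _ hj3]
    exact stmt13_getElem_w hT hA hσ s0 hj3 hj4

lemma stmt13_x_branch (s0 : Stmt13St T A σ) : stmt13x hT hA hσ s0 ∈ branches T := by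
  intro n
  have hk : n ≤ (stmt13Chain hT hA hσ s0 n).u.length := stmt13Chain_len hT hA hσ s0 n
  rw [stmt13_res_x hT hA hσ s0 n n hk]
  exact hT.1 _ (stmt13Chain hT hA hσ s0 n).hu _ (List.take_prefix _ _)

lemma stmt13_y_branch (s0 : Stmt13St T A σ) : stmt13y hT hA hσ s0 ∈ branches A := by
  intro n
  have hk : n ≤ (stmt13Chain hT hA hσ s0 n).w.length := by
    have h1 := stmt13Chain_len hT hA hσ s0 n
    have h2 := (stmt13Chain hT hA hσ s0 n).hlen
    omega
  rw [stmt13_res_y hT hA hσ s0 n n hk]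
  exact hA.1 _ (stmt13Chain hT hA hσ s0 n).hw _ (List.take_prefix _ _)

lemma stmt13_avoid (s0 : Stmt13St T A σ) (n : ℕ) :
    res (stmt13x hT hA hσ s0 + stmt13y hT hA hσ s0) (σ n).length ≠ σ n := by
  set k := (σ n).length with hkdef
  have hku : k ≤ (stmt13Chain hT hA hσ s0 k).u.length := stmt13Chain_len hT hA hσ s0 k
  have hkw : k ≤ (stmt13Chain hT hA hσ s0 k).w.length := by
    have := (stmt13Chain hT hA hσ s0 k).hlen; omega
  intro heq
  apply (stmt13Chain hT hA hσ s0 k).hinv n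
  have hres : res (stmt13x hT hA hσ s0 + stmt13y hT hA hσ s0) k =
      (List.zipWith (· + ·) (stmt13Chain hT hA hσ s0 k).u (stmt13Chain hT hA hσ s0 k).w).take k := by
    rw [List.take_zipWith,
      ← stmt13_res_x hT hA hσ s0 k k hku, ← stmt13_res_y hT hA hσ s0 k k hkw]
    apply List.ext_getElem
    · simp [res]
    · intro j hj1 hj2
      simp only [res, List.getElem_ofFn, List.getElem_zipWith]
      rfl
  rw [hres] at heq
  rw [← heq]
  exact List.take_prefix _ _

end Stmt13Aux


/-- For Miller trees `T₁, T₂`, the sum `[T₁] + [T₂]` is not fake null. -/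
theorem stmt13 (T₁ T₂ : Set (List ℤ)) (h₁ : IsMiller T₁) (h₂ : IsMiller T₂) :
    ¬ IsFakeNull (branches T₁ + branches T₂) := by
  intro hFN
  have hnil1 : ([] : List ℤ) ∈ T₁ := stmt13_nil_mem h₁.1 h₁.2.1
  have hnil2 : ([] : List ℤ) ∈ T₂ := stmt13_nil_mem h₂.1 h₂.2.1
  obtain ⟨τ, hτ, -, hτsp⟩ := h₁.2.2 [] hnil1
  set p := τ.length with hp
  obtain ⟨σ, hsum, htsum, hcov⟩ := hFN ((1 / 2) ^ (p + 1)) (by positivity)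
  have hσfin : ∀ m, {n | (σ n).length ≤ m}.Finite := stmt13_finite_small hsum
  have hbig : ∀ n, p < (σ n).length := by
    intro n
    by_contra hle
    push_neg at hle
    have h1 : (1 : ℝ) / 2 ^ (σ n).length ≤ ∑' n, (1 : ℝ) / 2 ^ (σ n).length :=
      Summable.le_tsum hsum n (fun j _ => by positivity)
    have h2 : ((1 : ℝ) / 2) ^ (p + 1) ≤ 1 / 2 ^ (σ n).length := by
      rw [div_pow, one_pow]
      apply one_div_le_one_div_of_le (by positivity)
      exact pow_le_pow_right₀ (by norm_num) (by omega)
    linarith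
  obtain ⟨w0, hw0, -, hw0len⟩ := stmt13_ext_len h₂ hnil2 p
  have hlen0 : τ.length = w0.length := by
    simp only [List.length_nil] at hw0len; omega
  have hinv0 : stmt13Inv σ τ w0 := by
    intro n hn
    have h1 := hn.length_le
    rw [List.length_zipWith] at h1
    have := hbig n
    omega
  set s0 : Stmt13St T₁ T₂ σ := ⟨τ, w0, hτ, hw0, hlen0, hτsp, hinv0⟩ with hs0
  set x := stmt13x h₁ h₂ hσfin s0 with hx
  set y := stmt13y h₁ h₂ hσfin s0 with hy
  have hz : x + y ∈ branches T₁ + branches T₂ :=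
    Set.add_mem_add (stmt13_x_branch h₁ h₂ hσfin s0) (stmt13_y_branch h₁ h₂ hσfin s0)
  obtain ⟨n, hn⟩ := Set.mem_iUnion.1 (hcov hz)
  exact stmt13_avoid h₁ h₂ hσfin s0 n hn
end

section
/- Every set in M₋ is meager; that is, M₋ ⊆ M. -/
open Pointwise Filter

/-- Every set in `M₋` is meager. -/
theorem stmt17 (F : Set (ℕ → ℤ)) (hF : MemMminus F) : IsMeagre F := by
  obtain ⟨xA, a, ha0, hmono, hsub⟩ := hF
  set D : ℕ → Set (ℕ → ℤ) := fun n => {x | ∀ k, a n ≤ k → k < a (n + 1) → x k = xA k}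
    with hDdef
  have hDopen : ∀ n, IsOpen (D n) := by
    intro n
    have hEq : D n = ⋂ k ∈ Finset.Ico (a n) (a (n + 1)), {x : ℕ → ℤ | x k = xA k} := by
      ext x
      simp only [hDdef, Set.mem_setOf_eq, Set.mem_iInter, Finset.mem_Ico]
      exact ⟨fun h k hk => h k hk.1 hk.2, fun h k h1 h2 => h k ⟨h1, h2⟩⟩
    rw [hEq]
    refine isOpen_biInter_finset fun k _ => ?_
    have : {x : ℕ → ℤ | x k = xA k} = (fun x : ℕ → ℤ => x k) ⁻¹' {xA k} := rfl
    rw [this]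
    exact IsOpen.preimage (continuous_apply k) (isOpen_discrete ({xA k} : Set ℤ))
  set U : ℕ → Set (ℕ → ℤ) := fun m => ⋃ n, ⋃ (_ : m ≤ n), D n with hUdef
  have hUopen : ∀ m, IsOpen (U m) := fun m =>
    isOpen_iUnion fun n => isOpen_iUnion fun _ => hDopen n
  have hUdense : ∀ m, Dense (U m) := by
    intro m
    rw [dense_iff_inter_open]
    rintro V hV ⟨x, hx⟩
    obtain ⟨I, u, hu, hsubV⟩ := isOpen_pi_iff.mp hV x hx
    set N : ℕ := max m (I.sup id + 1) with hNdef
    have haN : I.sup id < a N :=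
      lt_of_lt_of_le (Nat.lt_succ_of_le (le_refl _))
        (le_trans (le_max_right m _) hmono.le_apply)
    set y : ℕ → ℤ := fun k => if a N ≤ k ∧ k < a (N + 1) then xA k else x k with hydef
    refine ⟨y, ?_, ?_⟩
    · apply hsubV
      intro i hi
      have hiI : i ∈ I := hi
      have : i ≤ I.sup id := Finset.le_sup (f := id) hiI
      have hlt : ¬ (a N ≤ i ∧ i < a (N + 1)) := by omega
      simp only [hydef, if_neg hlt]
      exact (hu i hiI).2
    · refine Set.mem_iUnion.mpr ⟨N, Set.mem_iUnion.mpr ⟨le_max_left _ _, ?_⟩⟩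
      intro k h1 h2
      exact if_pos ⟨h1, h2⟩
  have hres : (⋂ m, U m) ∈ residual (ℕ → ℤ) :=
    countable_iInter_mem.mpr fun m => residual_of_dense_open (hUopen m) (hUdense m)
  refine Filter.mem_of_superset hres ?_
  intro x hx hxF
  obtain ⟨m, hm⟩ := Filter.eventually_atTop.mp (hsub hxF)
  have hxU : x ∈ U m := Set.mem_iInter.mp hx m
  obtain ⟨n, hn⟩ := Set.mem_iUnion.mp hxU
  obtain ⟨hmn, hD⟩ := Set.mem_iUnion.mp hn
  obtain ⟨k, hk1, hk2, hk3⟩ := hm n hmn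
  exact hk3 (hD k hk1 hk2)
end

section
/- The set {x ∈ ℤ^ω : ∀n, x(n) ∈ {0,1}} is a compact subset of ℤ^ω that is not fake null; in particular, there exists a compact set that is not fake null. -/
open Pointwise Filter

lemma mem_cyl_iff (σ : List ℤ) (x : ℕ → ℤ) :
    x ∈ cyl σ ↔ ∀ i : Fin σ.length, x i = σ.get i := by
  constructor
  · intro h i
    have := congrArg (fun l : List ℤ => l[(i : ℕ)]?) h
    simpa [res, List.getElem?_eq_getElem, i.2] using this
  · intro h
    apply List.ext_get (by simp [res])
    intro n h1 h2
    simpa [res] using h ⟨n, h2⟩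

lemma isOpen_cyl (σ : List ℤ) : IsOpen (cyl σ) := by
  have : cyl σ = (fun x : ℕ → ℤ => fun i : Fin σ.length => x i) ⁻¹'
      {fun i : Fin σ.length => σ.get i} := by
    ext x; simp [mem_cyl_iff, funext_iff]
  rw [this]
  exact (isOpen_discrete _).preimage (continuous_pi fun i => continuous_apply _)

lemma compact01 : IsCompact {x : ℕ → ℤ | ∀ n, x n ∈ ({0, 1} : Set ℤ)} := by
  have : {x : ℕ → ℤ | ∀ n, x n ∈ ({0, 1} : Set ℤ)}
      = Set.univ.pi (fun _ : ℕ => ({0, 1} : Set ℤ)) := by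
    ext x; simp [Set.mem_pi]
  rw [this]
  exact isCompact_univ_pi fun i => ((Set.finite_singleton (1:ℤ)).insert 0).isCompact

theorem notfake : ¬ IsFakeNull {x : ℕ → ℤ | ∀ n, x n ∈ ({0, 1} : Set ℤ)} := by
  classical
  intro h
  obtain ⟨σ, hsum, hlt, hcov⟩ := h 1 one_pos
  obtain ⟨s, hs⟩ := compact01.elim_finite_subcover (fun n => cyl (σ n))
    (fun n => isOpen_cyl _) hcov
  set L := s.sup fun n => (σ n).length with hL
  -- encoding of binary strings
  set e : (Fin L → Bool) → (ℕ → ℤ) :=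
    fun b n => if h : n < L then (if b ⟨n, h⟩ then 1 else 0) else 0 with he
  have heC : ∀ b, e b ∈ {x : ℕ → ℤ | ∀ n, x n ∈ ({0, 1} : Set ℤ)} := by
    intro b n
    simp only [he]
    split <;> [skip; simp]
    split <;> simp
  set T : ℕ → Finset (Fin L → Bool) :=
    fun n => Finset.univ.filter (fun b => e b ∈ cyl (σ n)) with hT
  have hcard : ∀ n ∈ s, (T n).card ≤ 2 ^ (L - (σ n).length) := by
    intro n hn
    have hl : (σ n).length ≤ L := by rw [hL]; exact Finset.le_sup (f := fun n => (σ n).length) hn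
    set l := (σ n).length
    calc (T n).card ≤ (Finset.univ : Finset (Fin (L - l) → Bool)).card := by
          apply Finset.card_le_card_of_injOn
            (fun b => fun j : Fin (L - l) => b ⟨l + j, by omega⟩)
          · intro b _; exact Finset.mem_univ _
          · intro b hb b' hb' heq
            simp only [hT, Finset.mem_coe, Finset.mem_filter, mem_cyl_iff] at hb hb'
            funext i
            by_cases hi : (i : ℕ) < l
            · have h1 := hb.2 ⟨i, hi⟩
              have h2 := hb'.2 ⟨i, hi⟩
              simp only [he] at h1 h2
              rw [dif_pos (show (i:ℕ) < L from i.2)] at h1 h2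
              have : (if b i then (1:ℤ) else 0) = if b' i then 1 else 0 := by
                rw [show (⟨(i:ℕ), i.2⟩ : Fin L) = i from rfl] at h1 h2
                rw [h1, h2]
              rcases Bool.eq_false_or_eq_true (b i) with h | h <;>
                rcases Bool.eq_false_or_eq_true (b' i) with h' | h' <;>
                  simp [h, h'] at this ⊢
            · have := congrFun heq ⟨(i : ℕ) - l, by omega⟩
              simpa [show l + ((i:ℕ) - l) = (i:ℕ) by omega] using this
      _ = 2 ^ (L - l) := by simp
  have hunion : (Finset.univ : Finset (Fin L → Bool)) ⊆ s.biUnion T := by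
    intro b _
    have := hs (heC b)
    simp only [Set.mem_iUnion] at this
    obtain ⟨n, hn, hmem⟩ := this
    refine Finset.mem_biUnion.2 ⟨n, hn, ?_⟩
    simp [hT, hmem]
  have hnat : 2 ^ L ≤ ∑ n ∈ s, 2 ^ (L - (σ n).length) := by
    calc 2 ^ L = (Finset.univ : Finset (Fin L → Bool)).card := by simp
      _ ≤ (s.biUnion T).card := Finset.card_le_card hunion
      _ ≤ ∑ n ∈ s, (T n).card := Finset.card_biUnion_le
      _ ≤ ∑ n ∈ s, 2 ^ (L - (σ n).length) := Finset.sum_le_sum hcard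
  -- real side
  have hfin : ∑ n ∈ s, (1 : ℝ) / 2 ^ (σ n).length < 1 :=
    lt_of_le_of_lt (Summable.sum_le_tsum s (fun n _ => by positivity) hsum) hlt
  have hR : (2 : ℝ) ^ L ≤ ∑ n ∈ s, (2:ℝ) ^ L * (1 / 2 ^ (σ n).length) := by
    calc (2 : ℝ) ^ L ≤ ((∑ n ∈ s, 2 ^ (L - (σ n).length) : ℕ) : ℝ) := by
          exact_mod_cast hnat
      _ = ∑ n ∈ s, (2:ℝ) ^ (L - (σ n).length) := by push_cast; ring
      _ ≤ ∑ n ∈ s, (2:ℝ) ^ L * (1 / 2 ^ (σ n).length) := by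
          apply Finset.sum_le_sum
          intro n hn
          have hl : (σ n).length ≤ L := by rw [hL]; exact Finset.le_sup (f := fun n => (σ n).length) hn
          rw [pow_sub₀ (2:ℝ) two_ne_zero hl]
          ring_nf
          exact le_refl _
  rw [← Finset.mul_sum] at hR
  nlinarith [hfin, pow_pos (show (0:ℝ) < 2 by norm_num) L]


/-- The set of 0-1 sequences is a compact subset of `ℤ^ω` that is
not fake null. -/
theorem stmt19 :
    IsCompact {x : ℕ → ℤ | ∀ n, x n ∈ ({0, 1} : Set ℤ)} ∧
    ¬ IsFakeNull {x : ℕ → ℤ | ∀ n, x n ∈ ({0, 1} : Set ℤ)} := by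
  exact ⟨compact01, notfake⟩
end
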